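/- arXiv:1109.6118 — 11 statements merged into one kernel-verified Lean document; each statement's English description precedes it below -/
import Mathlib

section
/- For a numerical semigroup S and any z ∈ ℤ, val_S(−z) = val_S(z) + z. -/
/-- A numerical semigroup, viewed as a set of integers: it contains 0, is closed
under addition, consists of nonnegative integers, and has finite complement in ℕ. -/
def IsNumericalSemigroup (S : Set ℤ) : Prop :=
  0 ∈ S ∧ (∀ a ∈ S, ∀ b ∈ S, a + b ∈ S) ∧ (∀ s ∈ S, 0 ≤ s) ∧
    {n : ℤ | 0 ≤ n ∧ n ∉ S}.Finite

/-- The valency of `z` with respect to `S`: the (finite) number of `s ∈ S`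
with `z + s ∉ S`. -/
noncomputable def val (S : Set ℤ) (z : ℤ) : ℕ :=
  {s : ℤ | s ∈ S ∧ z + s ∉ S}.ncard

theorem val_neg (S : Set ℤ) (hS : IsNumericalSemigroup S) (z : ℤ) :
    (val S (-z) : ℤ) = (val S z : ℤ) + z := by
  classical
  obtain ⟨h0, hadd, hpos, hfin⟩ := hS
  obtain ⟨b, hb⟩ := hfin.bddAbove
  set c : ℤ := max b 0 + 1 with hc_def
  have hc0 : 0 < c := by have := le_max_right b 0; omega
  have hc : ∀ n : ℤ, c ≤ n → n ∈ S := by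
    intro n hn
    by_contra hns
    have hmem : n ∈ {n : ℤ | 0 ≤ n ∧ n ∉ S} := ⟨by omega, hns⟩
    have := hb hmem
    have := le_max_left b 0
    simp only [hc_def] at hn
    omega
  have habs1 : z ≤ |z| := le_abs_self z
  have habs2 : -z ≤ |z| := neg_le_abs z
  have habs0 : 0 ≤ |z| := abs_nonneg z
  set m : ℤ := -|z| with hm
  set M : ℤ := c + |z| with hM
  set W : Finset ℤ := Finset.Icc m M with hW
  set P : Finset ℤ := W.filter (· ∈ S) with hP
  set Q : Finset ℤ := W.filter (fun x => x - z ∈ S) with hQ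
  -- val S (-z) = (P \ Q).card
  have hvalneg : val S (-z) = (P \ Q).card := by
    rw [val, ← Set.ncard_coe_finset]
    congr 1
    ext x
    simp only [Finset.coe_sdiff, Set.mem_diff, Finset.coe_filter, Set.mem_setOf_eq,
      Finset.mem_Icc, hP, hQ, hW]
    constructor
    · rintro ⟨hxS, hxz⟩
      have hx0 : 0 ≤ x := hpos x hxS
      have hxz' : x - z ∉ S := by
        intro h; exact hxz (by rwa [show -z + x = x - z by ring])
      have hlt : x - z < c := by
        by_contra h; exact hxz' (hc _ (by omega))
      exact ⟨⟨⟨by omega, by omega⟩, hxS⟩, fun h => hxz' h.2⟩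
    · rintro ⟨⟨⟨h1, h2⟩, hxS⟩, hnot⟩
      refine ⟨hxS, fun h => hnot ⟨⟨h1, h2⟩, ?_⟩⟩
      rwa [show x - z = -z + x by ring]
  -- val S z = (Q \ P).card
  have hvalz : val S z = (Q \ P).card := by
    rw [val, ← Set.ncard_image_of_injective {s : ℤ | s ∈ S ∧ z + s ∉ S}
      (add_left_injective z), ← Set.ncard_coe_finset]
    congr 1
    ext t
    simp only [Set.mem_image, Set.mem_setOf_eq, Finset.coe_sdiff, Set.mem_diff,
      Finset.coe_filter, Finset.mem_Icc, hP, hQ, hW]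
    constructor
    · rintro ⟨s, ⟨hsS, hzs⟩, rfl⟩
      have hs0 : 0 ≤ s := hpos s hsS
      have htS : s + z ∉ S := by rwa [show s + z = z + s by ring]
      have hlt : s + z < c := by
        by_contra h; exact htS (hc _ (by omega))
      refine ⟨⟨⟨by omega, by omega⟩, by simpa using hsS⟩, fun h => htS h.2⟩
    · rintro ⟨⟨⟨h1, h2⟩, htz⟩, hnot⟩
      refine ⟨t - z, ⟨htz, fun h => hnot ⟨⟨h1, h2⟩, ?_⟩⟩, by ring⟩
      rwa [show z + (t - z) = t by ring] at h
  -- card difference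
  have hsd1 : (P \ Q).card + (P ∩ Q).card = P.card := Finset.card_sdiff_add_card_inter P Q
  have hsd2 : (Q \ P).card + (Q ∩ P).card = Q.card := Finset.card_sdiff_add_card_inter Q P
  have hint : (P ∩ Q).card = (Q ∩ P).card := by rw [Finset.inter_comm]
  -- Q.card via shift
  have hQshift : Q.card = ((Finset.Icc (m - z) (M - z)).filter (· ∈ S)).card := by
    apply Finset.card_bij (fun x _ => x - z)
    · intro a ha
      simp only [hQ, hW, Finset.mem_filter, Finset.mem_Icc] at ha ⊢
      exact ⟨⟨by omega, by omega⟩, ha.2⟩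
    · intro a _ b _ h; omega
    · intro t ht
      simp only [Finset.mem_filter, Finset.mem_Icc] at ht
      refine ⟨t + z, ?_, by ring⟩
      simp only [hQ, hW, Finset.mem_filter, Finset.mem_Icc]
      exact ⟨⟨by omega, by omega⟩, by simpa using ht.2⟩
  -- counting lemma
  set K : ℕ := ((Finset.Ico (0:ℤ) c).filter (· ∈ S)).card with hK
  have count : ∀ l R : ℤ, l ≤ 0 → c ≤ R →
      (((Finset.Icc l R).filter (· ∈ S)).card : ℤ) = K + (R - c + 1) := by
    intro l R hl hR
    have h1 : (Finset.Icc l R).filter (· ∈ S) = (Finset.Icc 0 R).filter (· ∈ S) := by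
      ext x
      simp only [Finset.mem_filter, Finset.mem_Icc]
      constructor
      · rintro ⟨⟨_, h2⟩, hx⟩; exact ⟨⟨hpos x hx, h2⟩, hx⟩
      · rintro ⟨⟨h1', h2⟩, hx⟩; exact ⟨⟨by omega, h2⟩, hx⟩
    have h2 : Finset.Ico (0:ℤ) c ∪ Finset.Icc c R = Finset.Icc 0 R := by
      ext x
      simp only [Finset.mem_union, Finset.mem_Ico, Finset.mem_Icc]
      omega
    have h3 : (Finset.Icc c R).filter (· ∈ S) = Finset.Icc c R := by
      apply Finset.filter_true_of_mem
      intro x hx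
      exact hc x (Finset.mem_Icc.mp hx).1
    have hdisj : Disjoint ((Finset.Ico (0:ℤ) c).filter (· ∈ S))
        ((Finset.Icc c R).filter (· ∈ S)) := by
      apply Finset.disjoint_filter_filter
      rw [Finset.disjoint_left]
      intro a ha hb
      simp only [Finset.mem_Ico, Finset.mem_Icc] at ha hb
      omega
    rw [h1, ← h2, Finset.filter_union, Finset.card_union_of_disjoint hdisj, h3]
    push_cast
    rw [Int.card_Icc]
    have : (R + 1 - c).toNat = R + 1 - c := Int.toNat_of_nonneg (by omega)
    omega
  have hPcard : (P.card : ℤ) = K + (M - c + 1) := count m M (by omega) (by omega)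
  have hQcard : (Q.card : ℤ) = K + ((M - z) - c + 1) := by
    rw [hQshift]; exact count (m - z) (M - z) (by omega) (by omega)
  rw [hvalneg, hvalz]
  omega
end

section
/- Let S be a numerical semigroup of maximal embedding dimension with multiplicity e, and let S_1 = (M − e) where M = S \ {0} (so S_1 is a numerical semigroup, the blowup of S). Then for every z ∈ ℤ with z ∉ S and −z ∉ S (i.e., z ∈ ±H(S)), val_{S_1}(z) = val_S(z) − 1. -/
theorem val_blowup (S : Set ℤ) (hS : IsNumericalSemigroup S)
    (e : ℤ) (he : e ∈ S) (he0 : 0 < e) (hemin : ∀ s ∈ S, 0 < s → e ≤ s)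
    (S₁ : Set ℤ) (hS₁ : S₁ = (fun m => m - e) '' (S \ {0}))
    (hMED : IsNumericalSemigroup S₁)
    (z : ℤ) (hz : z ∉ S) (hz' : -z ∉ S) :
    val S₁ z = val S z - 1 := by
  set A : Set ℤ := {s : ℤ | s ∈ S ∧ z + s ∉ S} with hA_def
  set A₁ : Set ℤ := {s : ℤ | s ∈ S₁ ∧ z + s ∉ S₁} with hA₁_def
  -- A is finite
  have hG := hS.2.2.2
  have hA : A.Finite := by
    apply Set.Finite.subset ((Set.finite_Icc 0 (-z)).union
      (hG.preimage (add_right_injective z).injOn))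
    rintro s ⟨hs, hzs⟩
    by_cases h : z + s < 0
    · left; exact ⟨hS.2.2.1 s hs, by linarith⟩
    · right; exact ⟨not_lt.mp h, hzs⟩
  -- the key bijection
  have key : A₁ = (fun s => s - e) '' (A \ {0}) := by
    ext t
    constructor
    · rintro ⟨ht1, ht2⟩
      rw [hS₁] at ht1
      obtain ⟨m, ⟨hmS, hm0⟩, rfl⟩ := ht1
      refine ⟨m, ⟨⟨hmS, ?_⟩, hm0⟩, rfl⟩
      intro hzm
      by_cases hzm0 : z + m = 0
      · exact hz' (by rw [show -z = m by linarith]; exact hmS)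
      · exact ht2 (by rw [hS₁]; exact ⟨z + m, ⟨hzm, hzm0⟩, by ring⟩)
    · rintro ⟨s, ⟨⟨hsS, hzs⟩, hs0⟩, rfl⟩
      simp only [Set.mem_singleton_iff] at hs0
      constructor
      · rw [hS₁]; exact ⟨s, ⟨hsS, hs0⟩, rfl⟩
      · intro hmem
        rw [hS₁] at hmem
        obtain ⟨m, ⟨hmS, _⟩, hme⟩ := hmem
        simp only at hme
        exact hzs (by rw [show z + s = m by linarith]; exact hmS)
  have h0A : (0 : ℤ) ∈ A := ⟨hS.1, by simpa using hz⟩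
  have hinj : Function.Injective (fun s : ℤ => s - e) := fun a b h => by
    simpa using h
  calc val S₁ z = ((fun s => s - e) '' (A \ {0})).ncard := by rw [val, ← hA₁_def, key]
    _ = (A \ {0}).ncard := Set.ncard_image_of_injective _ hinj
    _ = A.ncard - 1 := Set.ncard_diff_singleton_of_mem h0A
    _ = val S z - 1 := rfl
end

section
/- Let S = {0 = s_0 < s_1 < ...} be an Arf numerical semigroup. Then for every i ≥ 0, I_i − I_i = V_i ∩ ℕ, where I_i = {s ∈ S : s ≥ s_i}. -/
theorem Arf_Ii_sub_Ii (S : Set ℤ) (hS : IsNumericalSemigroup S)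
    (f : ℕ → ℤ) (hf : StrictMono f) (hrange : Set.range f = S)
    (hArf : ∀ i : ℕ, ∀ a ∈ S, ∀ b ∈ S, f i ≤ a → f i ≤ b → a + b - f i ∈ S)
    (i : ℕ) :
    {z : ℤ | ∀ s ∈ S, f i ≤ s → z + s ∈ S ∧ f i ≤ z + s} =
      {z : ℤ | val S z ≤ i} ∩ {z : ℤ | 0 ≤ z} := by
  obtain ⟨h0, hadd, hpos, hfin⟩ := hS
  have hfS : ∀ j, f j ∈ S := fun j => hrange ▸ Set.mem_range_self j
  ext z
  simp only [Set.mem_setOf_eq, Set.mem_inter_iff]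
  constructor
  · intro hz
    have hz0 : 0 ≤ z := by
      have := (hz (f i) (hfS i) le_rfl).2
      linarith
    refine ⟨?_, hz0⟩
    have hsub : {s : ℤ | s ∈ S ∧ z + s ∉ S} ⊆ f '' (Set.Iio i) := by
      rintro s ⟨hsS, hns⟩
      have : s ∈ Set.range f := by rw [hrange]; exact hsS
      obtain ⟨j, rfl⟩ := this
      refine ⟨j, ?_, rfl⟩
      by_contra h
      exact hns (hz (f j) hsS (hf.monotone (not_lt.1 h))).1
    have h1 : val S z ≤ (f '' Set.Iio i).ncard :=
      Set.ncard_le_ncard hsub ((Set.finite_Iio i).image f)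
    have h2 : (f '' Set.Iio i).ncard = i := by
      rw [Set.ncard_image_of_injective _ hf.injective, ← Finset.coe_Iio,
        Set.ncard_coe_finset, Nat.card_Iio]
    omega
  · rintro ⟨hval, hz0⟩ s hsS hfis
    have key : z + s ∈ S := by
      by_contra hns
      have hsub : f '' (Set.Iic i) ⊆ {t : ℤ | t ∈ S ∧ z + t ∉ S} := by
        rintro t ⟨j, hj, rfl⟩
        refine ⟨hfS j, fun hmem => hns ?_⟩
        have h1 : f j ≤ z + f j := by linarith
        have h2 : f j ≤ s := le_trans (hf.monotone hj) hfis
        have := hArf j (z + f j) hmem s hsS h1 h2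
        have heq : z + f j + s - f j = z + s := by ring
        rwa [heq] at this
      have hfin' : {t : ℤ | t ∈ S ∧ z + t ∉ S}.Finite := by
        have hsub2 : {t : ℤ | t ∈ S ∧ z + t ∉ S} ⊆
            (fun t => z + t) ⁻¹' {n : ℤ | 0 ≤ n ∧ n ∉ S} := by
          rintro t ⟨htS, hnt⟩
          simp only [Set.mem_preimage, Set.mem_setOf_eq]
          exact ⟨by linarith [hpos t htS], hnt⟩
        exact ((hfin.preimage ((add_right_injective z).injOn))).subset hsub2
      have h1 : (f '' Set.Iic i).ncard ≤ val S z :=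
        Set.ncard_le_ncard hsub hfin'
      have h2 : (f '' Set.Iic i).ncard = i + 1 := by
        rw [Set.ncard_image_of_injective _ hf.injective, ← Finset.coe_Iic,
          Set.ncard_coe_finset, Nat.card_Iic]
      omega
    exact ⟨key, by linarith⟩
end

section
/- Let S be an Arf numerical semigroup and a ∈ ℕ. Then val_S(a) = i if and only if i is the least index such that a + s_j ∈ S for all j ≥ i (where s_0 < s_1 < ... enumerates S). In particular, if a + s_i ∈ S then a + s_j ∈ S for all j ≥ i. -/
theorem Arf_val_eq_least (S : Set ℤ) (hS : IsNumericalSemigroup S)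
    (f : ℕ → ℤ) (hf : StrictMono f) (hrange : Set.range f = S)
    (hArf : ∀ i : ℕ, ∀ a ∈ S, ∀ b ∈ S, f i ≤ a → f i ≤ b → a + b - f i ∈ S)
    (a : ℕ) :
    (∀ i : ℕ, val S (a : ℤ) = i ↔
      IsLeast {i : ℕ | ∀ j : ℕ, i ≤ j → (a : ℤ) + f j ∈ S} i) ∧
    (∀ i : ℕ, (a : ℤ) + f i ∈ S → ∀ j : ℕ, i ≤ j → (a : ℤ) + f j ∈ S) := by
  classical
  obtain ⟨h0, hadd, hpos, hfin⟩ := hS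
  have hmemf : ∀ i, f i ∈ S := fun i => hrange ▸ Set.mem_range_self i
  -- key monotone property
  have key : ∀ i : ℕ, (a : ℤ) + f i ∈ S → ∀ j : ℕ, i ≤ j → (a : ℤ) + f j ∈ S := by
    intro i hi j hij
    have ha : (0:ℤ) ≤ (a:ℤ) := Int.ofNat_nonneg a
    have h1 : f i ≤ (a : ℤ) + f i := by omega
    have h2 : f i ≤ f j := hf.monotone hij
    have := hArf i _ hi _ (hmemf j) h1 h2
    have heq : (a : ℤ) + f i + f j - f i = (a : ℤ) + f j := by ring
    rwa [heq] at this
  -- existence of a good index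
  have hex : ∃ j : ℕ, (a : ℤ) + f j ∈ S := by
    obtain ⟨B, hB⟩ := hfin.bddAbove
    have hfge : ∀ j : ℕ, (j : ℤ) ≤ f j := by
      intro j
      induction j with
      | zero => exact_mod_cast hpos _ (hmemf 0)
      | succ n ih =>
        have : f n < f (n + 1) := hf (by omega)
        push_cast
        omega
    refine ⟨B.toNat + 1, ?_⟩
    by_contra hcon
    have hmem : (a : ℤ) + f (B.toNat + 1) ∈ {n : ℤ | 0 ≤ n ∧ n ∉ S} := by
      refine ⟨?_, hcon⟩
      have := hfge (B.toNat + 1)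
      have : (0 : ℤ) ≤ f (B.toNat + 1) := by omega
      positivity
    have hle := hB hmem
    have := hfge (B.toNat + 1)
    have hBt : (B : ℤ) ≤ B.toNat := Int.self_le_toNat B
    push_cast at hle this ⊢
    omega
  set i₀ := Nat.find hex with hi₀
  have hP₀ : (a : ℤ) + f i₀ ∈ S := Nat.find_spec hex
  have hlt : ∀ j, j < i₀ → (a : ℤ) + f j ∉ S := fun j hj => Nat.find_min hex hj
  have hsetq : {s : ℤ | s ∈ S ∧ (a : ℤ) + s ∉ S} = f '' Set.Iio i₀ := by
    ext s
    constructor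
    · rintro ⟨hs, hns⟩
      obtain ⟨j, rfl⟩ := hrange ▸ hs
      refine ⟨j, ?_, rfl⟩
      simp only [Set.mem_Iio]
      by_contra hj
      push_neg at hj
      exact hns (key i₀ hP₀ j hj)
    · rintro ⟨j, hj, rfl⟩
      exact ⟨hmemf j, hlt j hj⟩
  have hval : val S (a : ℤ) = i₀ := by
    rw [val, hsetq, Set.ncard_image_of_injective _ hf.injective]
    rw [Set.ncard_eq_toFinset_card', Set.toFinset_Iio, Nat.card_Iio]
  have hIsLeast : IsLeast {i : ℕ | ∀ j : ℕ, i ≤ j → (a : ℤ) + f j ∈ S} i₀ :=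
    ⟨key i₀ hP₀, fun i hi => Nat.find_le (hi i le_rfl)⟩
  refine ⟨fun i => ⟨?_, ?_⟩, key⟩
  · rintro rfl
    rwa [hval]
  · intro h
    rw [hval]
    exact (IsLeast.unique h hIsLeast).symm
end

section
/- Let S be a numerical semigroup and let Σ = {(a,b) ∈ ℕ² : val_S(a−b) ≤ b}, where a−b is computed in ℤ. Then Σ is a submonoid of ℕ² and (a,b) ∈ Σ if and only if (b,a) ∈ Σ. -/
/-- The semigroup `Σ ⊆ ℕ²` of the associated graded ring of the ring of
differential operators on `ℂ[S]`: `(a,b) ∈ Σ` iff `val S (a - b) ≤ b`. -/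
noncomputable def SigmaSet (S : Set ℤ) : Set (ℕ × ℕ) :=
  {p : ℕ × ℕ | val S ((p.1 : ℤ) - (p.2 : ℤ)) ≤ p.2}

/-- There is a bound `c` above which every integer lies in `S`. -/
lemma exists_bound (S : Set ℤ) (hS : IsNumericalSemigroup S) :
    ∃ c : ℤ, 0 ≤ c ∧ ∀ m : ℤ, c ≤ m → m ∈ S := by
  obtain ⟨b, hb⟩ := hS.2.2.2.bddAbove
  refine ⟨max b 0 + 1, by positivity, fun m hm => ?_⟩
  by_contra hmS
  have h0 : (0:ℤ) ≤ m := le_trans (by positivity) hm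
  have h1 : m ≤ b := hb ⟨h0, hmS⟩
  have h2 : m ≤ max b 0 := le_trans h1 (le_max_left _ _)
  omega

lemma val_set_finite (S : Set ℤ) (hS : IsNumericalSemigroup S) (z : ℤ) :
    {s : ℤ | s ∈ S ∧ z + s ∉ S}.Finite := by
  obtain ⟨c, hc0, hc⟩ := exists_bound S hS
  refine (Set.finite_Ico 0 (c - z)).subset fun s hs => ?_
  refine ⟨hS.2.2.1 s hs.1, ?_⟩
  by_contra h
  exact hs.2 (hc _ (by omega))

lemma val_zero (S : Set ℤ) (hS : IsNumericalSemigroup S) : val S 0 = 0 := by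
  have h : {s : ℤ | s ∈ S ∧ (0:ℤ) + s ∉ S} = ∅ := by
    ext s
    simp only [Set.mem_setOf_eq, Set.mem_empty_iff_false, iff_false, not_and, not_not]
    intro hs
    simpa using hs
  simp [val, h]

lemma val_add_le (S : Set ℤ) (hS : IsNumericalSemigroup S) (x y : ℤ) :
    val S (x + y) ≤ val S x + val S y := by
  have hx := val_set_finite S hS x
  have hy := val_set_finite S hS y
  have hsub : {s : ℤ | s ∈ S ∧ x + y + s ∉ S} ⊆
      ((fun t => t - y) '' {s : ℤ | s ∈ S ∧ x + s ∉ S}) ∪ {s : ℤ | s ∈ S ∧ y + s ∉ S} := by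
    intro s hs
    by_cases h : y + s ∈ S
    · left
      exact ⟨y + s, ⟨h, by have := hs.2; rwa [show x + (y + s) = x + y + s by ring]⟩, by ring⟩
    · right
      exact ⟨hs.1, h⟩
  calc val S (x + y) ≤ (((fun t => t - y) '' {s : ℤ | s ∈ S ∧ x + s ∉ S}) ∪
        {s : ℤ | s ∈ S ∧ y + s ∉ S}).ncard :=
        Set.ncard_le_ncard hsub ((hx.image _).union hy)
    _ ≤ ((fun t => t - y) '' {s : ℤ | s ∈ S ∧ x + s ∉ S}).ncard +
        {s : ℤ | s ∈ S ∧ y + s ∉ S}.ncard := Set.ncard_union_le _ _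
    _ = val S x + val S y := by
        rw [Set.ncard_image_of_injective _ sub_left_injective]
        rfl

lemma val_neg_nat (S : Set ℤ) (hS : IsNumericalSemigroup S) (n : ℕ) :
    val S (-(n:ℤ)) = val S n + n := by
  classical
  obtain ⟨c, hc0, hc⟩ := exists_bound S hS
  set I : Finset ℤ := Finset.Icc (-(n:ℤ)) (c - 1) with hI
  set B : Finset ℤ := I.filter (fun t => t ∈ S ∧ t + (n:ℤ) ∉ S) with hB
  set C : Finset ℤ := I.filter (fun t => t ∉ S ∧ t + (n:ℤ) ∈ S) with hC
  set D : Finset ℤ := I.filter (fun t => t ∈ S ∧ t + (n:ℤ) ∈ S) with hD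
  -- val S n = B.card
  have hvn : val S (n:ℤ) = B.card := by
    rw [val, ← Set.ncard_coe_finset]
    congr 1
    ext s
    simp only [Set.mem_setOf_eq, hB, Finset.coe_filter, Finset.mem_Icc, hI]
    constructor
    · rintro ⟨h1, h2⟩
      have h0 : (0:ℤ) ≤ s := hS.2.2.1 s h1
      have hlt : s + n < c := by
        by_contra h
        exact h2 (by rw [add_comm]; exact hc _ (by omega))
      exact ⟨⟨by omega, by omega⟩, h1, by rwa [add_comm] at h2⟩
    · rintro ⟨_, h1, h2⟩
      exact ⟨h1, by rwa [add_comm]⟩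
  -- val S (-n) = C.card
  have hvneg : val S (-(n:ℤ)) = C.card := by
    rw [val, ← Set.ncard_coe_finset,
      ← Set.ncard_image_of_injective {s : ℤ | s ∈ S ∧ -(n:ℤ) + s ∉ S}
        (sub_left_injective (b := (n:ℤ)))]
    congr 1
    ext t
    simp only [Set.mem_image, Set.mem_setOf_eq, hC, Finset.coe_filter, Finset.mem_Icc, hI]
    constructor
    · rintro ⟨s, ⟨h1, h2⟩, rfl⟩
      have h0 : (0:ℤ) ≤ s := hS.2.2.1 s h1
      have ht : s - n + n = s := by ring
      have hns : s - n ∉ S := by rwa [show -(n:ℤ) + s = s - n by ring] at h2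
      have hlt : s - n < c := by
        by_contra h
        exact hns (hc _ (by omega))
      exact ⟨⟨by omega, by omega⟩, hns, by rwa [ht]⟩
    · rintro ⟨⟨ht0, ht1⟩, h1, h2⟩
      exact ⟨t + n, ⟨h2, by rwa [show -(n:ℤ) + (t + n) = t by ring]⟩, by ring⟩
  -- counting
  have hBD : B.card + D.card = (I.filter (fun t => t ∈ S)).card := by
    rw [hB, hD, ← Finset.card_union_of_disjoint, ← Finset.filter_or]
    · congr 1
      apply Finset.filter_congr
      intro t _
      constructor
      · rintro (⟨h, _⟩ | ⟨h, _⟩) <;> exact h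
      · intro h
        by_cases h' : t + (n:ℤ) ∈ S
        · right; exact ⟨h, h'⟩
        · left; exact ⟨h, h'⟩
    · rw [Finset.disjoint_left]
      rintro t ht ht'
      simp only [Finset.mem_filter] at ht ht'
      exact ht.2.2 ht'.2.2
  have hCD : C.card + D.card = (I.filter (fun t => t + (n:ℤ) ∈ S)).card := by
    rw [hC, hD, ← Finset.card_union_of_disjoint, ← Finset.filter_or]
    · congr 1
      apply Finset.filter_congr
      intro t _
      constructor
      · rintro (⟨_, h⟩ | ⟨_, h⟩) <;> exact h
      · intro h
        by_cases h' : t ∈ S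
        · right; exact ⟨h', h⟩
        · left; exact ⟨h', h⟩
    · rw [Finset.disjoint_left]
      rintro t ht ht'
      simp only [Finset.mem_filter] at ht ht'
      exact ht.2.1 ht'.2.1
  -- the shifted filter has n more elements
  have key : (I.filter (fun t => t + (n:ℤ) ∈ S)).card = (I.filter (fun t => t ∈ S)).card + n := by
    have h1 : (Finset.Icc (0:ℤ) (c - 1 + n)).filter (fun t => t ∈ S)
        = (I.filter (fun t => t + (n:ℤ) ∈ S)).map (addRightEmbedding (n:ℤ)) := by
      ext x
      simp only [Finset.mem_filter, Finset.mem_Icc, Finset.mem_map, addRightEmbedding_apply, hI]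
      constructor
      · rintro ⟨⟨hx0, hx1⟩, hxS⟩
        exact ⟨x - n, ⟨⟨by omega, by omega⟩, by simpa using hxS⟩, by ring⟩
      · rintro ⟨t, ⟨⟨ht0, ht1⟩, htS⟩, rfl⟩
        exact ⟨⟨by omega, by omega⟩, htS⟩
    have h2 : (Finset.Icc (0:ℤ) (c - 1 + n)).filter (fun t => t ∈ S)
        = ((Finset.Icc (0:ℤ) (c - 1)).filter (fun t => t ∈ S)) ∪ Finset.Icc c (c - 1 + n) := by
      ext x
      simp only [Finset.mem_filter, Finset.mem_Icc, Finset.mem_union]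
      constructor
      · rintro ⟨⟨hx0, hx1⟩, hxS⟩
        by_cases h : x ≤ c - 1
        · exact Or.inl ⟨⟨hx0, h⟩, hxS⟩
        · exact Or.inr ⟨by omega, hx1⟩
      · rintro (⟨⟨hx0, hx1⟩, hxS⟩ | ⟨hx0, hx1⟩)
        · exact ⟨⟨hx0, by omega⟩, hxS⟩
        · exact ⟨⟨by omega, hx1⟩, hc _ hx0⟩
    have hdisj : Disjoint ((Finset.Icc (0:ℤ) (c - 1)).filter (fun t => t ∈ S))
        (Finset.Icc c (c - 1 + n)) := by
      rw [Finset.disjoint_left]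
      rintro x hx hx'
      simp only [Finset.mem_filter, Finset.mem_Icc] at hx hx'
      omega
    have h3 : (Finset.Icc (0:ℤ) (c - 1)).filter (fun t => t ∈ S)
        = I.filter (fun t => t ∈ S) := by
      ext x
      simp only [Finset.mem_filter, Finset.mem_Icc, hI]
      constructor
      · rintro ⟨⟨h0, h1⟩, hS'⟩; exact ⟨⟨by omega, h1⟩, hS'⟩
      · rintro ⟨⟨h0, h1⟩, hS'⟩; exact ⟨⟨hS.2.2.1 _ hS', h1⟩, hS'⟩
    have hcard : (Finset.Icc c (c - 1 + n)).card = n := by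
      rw [Int.card_Icc]; omega
    calc (I.filter (fun t => t + (n:ℤ) ∈ S)).card
        = ((I.filter (fun t => t + (n:ℤ) ∈ S)).map (addRightEmbedding (n:ℤ))).card :=
          (Finset.card_map _).symm
      _ = ((Finset.Icc (0:ℤ) (c - 1 + n)).filter (fun t => t ∈ S)).card := by rw [h1]
      _ = ((Finset.Icc (0:ℤ) (c - 1)).filter (fun t => t ∈ S)).card
          + (Finset.Icc c (c - 1 + n)).card := by
          rw [h2, Finset.card_union_of_disjoint hdisj]
      _ = (I.filter (fun t => t ∈ S)).card + n := by rw [h3, hcard]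
  omega

theorem SigmaSet_submonoid_symm (S : Set ℤ) (hS : IsNumericalSemigroup S) :
    ((0, 0) ∈ SigmaSet S ∧
      ∀ p ∈ SigmaSet S, ∀ q ∈ SigmaSet S, p + q ∈ SigmaSet S) ∧
    (∀ a b : ℕ, (a, b) ∈ SigmaSet S ↔ (b, a) ∈ SigmaSet S) := by
  constructor
  · constructor
    · show val S ((0:ℤ) - (0:ℤ)) ≤ 0
      simp [val_zero S hS]
    · intro p hp q hq
      show val S (((p + q).1 : ℤ) - ((p + q).2 : ℤ)) ≤ (p + q).2
      have : ((((p + q).1 : ℕ) : ℤ) - (((p + q).2 : ℕ) : ℤ))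
          = ((p.1 : ℤ) - p.2) + ((q.1 : ℤ) - q.2) := by
        simp [Prod.fst_add, Prod.snd_add]; push_cast; ring
      rw [this]
      calc val S (((p.1 : ℤ) - p.2) + ((q.1 : ℤ) - q.2))
          ≤ val S ((p.1 : ℤ) - p.2) + val S ((q.1 : ℤ) - q.2) := val_add_le S hS _ _
        _ ≤ p.2 + q.2 := Nat.add_le_add hp hq
        _ = (p + q).2 := rfl
  · have main : ∀ a b : ℕ, (a, b) ∈ SigmaSet S → (b, a) ∈ SigmaSet S := by
      intro a b hab
      have hab' : val S ((a:ℤ) - b) ≤ b := hab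
      show val S ((b:ℤ) - a) ≤ a
      rcases le_total b a with h | h
      · have hn : ((a - b : ℕ) : ℤ) = (a:ℤ) - b := by omega
        have h1 : val S ((b:ℤ) - a) = val S ((a - b : ℕ)) + (a - b) := by
          rw [show (b:ℤ) - a = -(((a - b : ℕ) : ℤ)) by omega]
          exact val_neg_nat S hS (a - b)
        rw [h1, hn, ]
        have := hab'
        omega
      · have hn : ((b - a : ℕ) : ℤ) = (b:ℤ) - a := by omega
        have h1 : val S ((a:ℤ) - b) = val S ((b - a : ℕ)) + (b - a) := by
          rw [show (a:ℤ) - b = -(((b - a : ℕ) : ℤ)) by omega]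
          exact val_neg_nat S hS (b - a)
        rw [h1] at hab'
        rw [← hn]
        omega
    exact fun a b => ⟨main a b, main b a⟩
end

section
/- Let S be a numerical semigroup and Σ = {(a,b) ∈ ℕ² : val_S(a−b) ≤ b}. Then the complement ℕ² \ Σ is finite. -/
theorem SigmaSet_cofinite (S : Set ℤ) (hS : IsNumericalSemigroup S) :
    {p : ℕ × ℕ | p ∉ SigmaSet S}.Finite := by
  obtain ⟨h0, hadd, hpos, hfin⟩ := hS
  set G := {n : ℤ | 0 ≤ n ∧ n ∉ S} with hGdef
  obtain ⟨F0, hF0⟩ := hfin.bddAbove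
  set F : ℤ := max F0 0 with hFdef
  have hF0' : (0:ℤ) ≤ F := le_max_right _ _
  have hGF : ∀ t ∈ G, t ≤ F := fun t ht => le_trans (hF0 ht) (le_max_left _ _)
  have hmem : ∀ n : ℤ, 0 ≤ n → F < n → n ∈ S := by
    intro n hn hFn
    by_contra h
    exact absurd (hGF n ⟨hn, h⟩) (not_le.mpr hFn)
  -- val vanishes for z > F
  have hval0 : ∀ z : ℤ, F < z → val S z = 0 := by
    intro z hz
    have hempty : {s : ℤ | s ∈ S ∧ z + s ∉ S} = ∅ := by
      ext s
      simp only [Set.mem_setOf_eq, Set.mem_empty_iff_false, iff_false, not_and, not_not]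
      intro hs
      exact hmem _ (by linarith [hpos s hs]) (by linarith [hpos s hs])
    rw [val, hempty, Set.ncard_empty]
  -- val is bounded by (-z).toNat for z < -F
  have hvalneg : ∀ z : ℤ, z < -F → val S z ≤ (-z).toNat := by
    intro z hz
    set T := {s : ℤ | s ∈ S ∧ z + s ∉ S} with hT
    set A := {s : ℤ | s ∈ T ∧ z + s < 0} with hA
    set B := {s : ℤ | s ∈ T ∧ 0 ≤ z + s} with hB
    have hTAB : T ⊆ A ∪ B := by
      intro s hs
      rcases lt_or_ge (z + s) 0 with h | h
      · exact Or.inl ⟨hs, h⟩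
      · exact Or.inr ⟨hs, h⟩
    have hAsub : A ⊆ Set.Ico (0:ℤ) (-z) := by
      rintro s ⟨hsT, hs⟩
      exact ⟨hpos s hsT.1, by linarith⟩
    have hGsub : G ⊆ Set.Ico (0:ℤ) (-z) := by
      intro t ht
      exact ⟨ht.1, by linarith [hGF t ht]⟩
    have hAfin : A.Finite := (Set.finite_Ico _ _).subset hAsub
    have hdisj : Disjoint A G := by
      rw [Set.disjoint_left]
      rintro s ⟨hsT, _⟩ hsG
      exact hsG.2 hsT.1
    have hIco : (Set.Ico (0:ℤ) (-z)).ncard = (-z).toNat := by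
      rw [← Finset.coe_Ico, Set.ncard_coe_finset, Int.card_Ico]
      omega
    have h1 : A.ncard + G.ncard ≤ (-z).toNat := by
      rw [← hIco, ← Set.ncard_union_eq hdisj hAfin hfin]
      exact Set.ncard_le_ncard (Set.union_subset hAsub hGsub) (Set.finite_Ico _ _)
    have hBG : (fun s => z + s) '' B ⊆ G := by
      rintro _ ⟨s, hs, rfl⟩
      exact ⟨hs.2, hs.1.2⟩
    have hBfin : B.Finite :=
      Set.Finite.of_finite_image (hfin.subset hBG)
        ((add_right_injective z).injOn)
    have h2 : B.ncard ≤ G.ncard := by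
      have h3 := Set.ncard_le_ncard hBG hfin
      rwa [Set.ncard_image_of_injective _ (add_right_injective z)] at h3
    calc val S z = T.ncard := rfl
      _ ≤ (A ∪ B).ncard := Set.ncard_le_ncard hTAB (hAfin.union hBfin)
      _ ≤ A.ncard + B.ncard := Set.ncard_union_le A B
      _ ≤ A.ncard + G.ncard := by omega
      _ ≤ (-z).toNat := h1
  set M : ℕ := (Finset.Icc (-F) F).sup (fun z => val S z) with hMdef
  apply ((Finset.range (M + F.toNat + 1) ×ˢ Finset.range (M + 1)).finite_toSet).subset
  rintro ⟨a, b⟩ hp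
  simp only [Set.mem_setOf_eq, SigmaSet, not_le] at hp
  have hab1 : (a:ℤ) - b ≤ F := by
    by_contra h
    rw [hval0 _ (not_le.mp h)] at hp
    omega
  have hab2 : -F ≤ (a:ℤ) - b := by
    by_contra h
    have h4 := hvalneg _ (not_le.mp h)
    omega
  have hbM : val S ((a:ℤ) - b) ≤ M :=
    Finset.le_sup (by simp only [Finset.mem_Icc]; omega)
  simp only [Finset.coe_product, Set.mem_prod, Finset.mem_coe, Finset.mem_range]
  omega
end

section
/- Let S be a numerical semigroup and Σ = {(a,b) ∈ ℕ² : val_S(a−b) ≤ b}, with maximal ideal Σ₊ = Σ \ {(0,0)}. For τ ∈ ℤ², the following are equivalent: (1) τ ∉ Σ and τ + Σ₊ ⊆ Σ₊ (i.e., τ is a pseudo-Frobenius element of Σ); (2) τ + (1,1) = (val_S(−h), val_S(h)) for some h ∈ ±H(S). -/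
/-- The semigroup `Σ`, viewed inside `ℤ²`: `(a,b) ∈ Σ` iff `a,b ≥ 0` and
`val S (a - b) ≤ b`. -/
noncomputable def SigmaZ (S : Set ℤ) : Set (ℤ × ℤ) :=
  {z : ℤ × ℤ | 0 ≤ z.1 ∧ 0 ≤ z.2 ∧ (val S (z.1 - z.2) : ℤ) ≤ z.2}

section Aux

variable {S : Set ℤ} {C : ℤ}

/-- Existence of a conductor bound. -/
lemma exists_conductor (hS : IsNumericalSemigroup S) :
    ∃ C : ℤ, 0 ≤ C ∧ ∀ n : ℤ, C ≤ n → n ∈ S := by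
  obtain ⟨C₀, hC₀⟩ := hS.2.2.2.bddAbove
  refine ⟨max C₀ 0 + 1, by positivity, fun n hn => ?_⟩
  by_contra hnS
  have h0n : 0 ≤ n := le_trans (by positivity) hn
  have h1 := hC₀ (show n ∈ {n : ℤ | 0 ≤ n ∧ n ∉ S} from ⟨h0n, hnS⟩)
  have h2 : n ≤ max C₀ 0 := le_trans h1 (le_max_left _ _)
  omega

lemma valset_finite (hpos : ∀ s ∈ S, 0 ≤ s) (hC : ∀ n : ℤ, C ≤ n → n ∈ S) (z : ℤ) :
    {s : ℤ | s ∈ S ∧ z + s ∉ S}.Finite := by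
  apply (Set.finite_Ico 0 (C - z)).subset
  rintro s ⟨hs, hzs⟩
  refine Set.mem_Ico.mpr ⟨hpos s hs, ?_⟩
  by_contra hlt
  exact hzs (hC _ (by omega))

lemma val_eq_zero_of_mem (hadd : ∀ a ∈ S, ∀ b ∈ S, a + b ∈ S) {z : ℤ} (hz : z ∈ S) :
    val S z = 0 := by
  have h : {s : ℤ | s ∈ S ∧ z + s ∉ S} = ∅ := by
    ext s; simp only [Set.mem_setOf_eq, Set.mem_empty_iff_false, iff_false, not_and, not_not]
    exact fun hs => hadd z hz s hs
  rw [val, h, Set.ncard_empty]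

lemma val_pos_of_notMem (hpos : ∀ s ∈ S, 0 ≤ s) (hC : ∀ n : ℤ, C ≤ n → n ∈ S)
    (h0 : 0 ∈ S) {z : ℤ} (hz : z ∉ S) : 1 ≤ val S z := by
  have hfin := valset_finite hpos hC z
  have hne : {s : ℤ | s ∈ S ∧ z + s ∉ S}.Nonempty := ⟨0, h0, by simpa using hz⟩
  exact (Set.ncard_pos hfin).mpr hne

/-- adding a nonzero element of S strictly decreases val of a non-element. -/
lemma val_add_lt (hS : IsNumericalSemigroup S) (hC : ∀ n : ℤ, C ≤ n → n ∈ S)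
    {z t : ℤ} (hz : z ∉ S) (ht : t ∈ S) (ht0 : t ≠ 0) :
    val S (z + t) + 1 ≤ val S z := by
  obtain ⟨h0, hadd, hpos, -⟩ := hS
  have hfinz := valset_finite hpos hC z
  have hsub : insert 0 ((fun s => t + s) '' {s : ℤ | s ∈ S ∧ z + t + s ∉ S})
      ⊆ {s : ℤ | s ∈ S ∧ z + s ∉ S} := by
    rintro x (rfl | ⟨s, ⟨hs, hzts⟩, rfl⟩)
    · exact ⟨h0, by simpa using hz⟩
    · exact ⟨hadd t ht s hs, by rw [show z + (t + s) = z + t + s by ring]; exact hzts⟩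
  have hnotmem : (0 : ℤ) ∉ (fun s => t + s) '' {s : ℤ | s ∈ S ∧ z + t + s ∉ S} := by
    rintro ⟨s, ⟨hs, -⟩, hts⟩
    have hts' : t + s = 0 := hts
    have h1 := hpos s hs
    have h2 := hpos t ht
    omega
  have hficard : ((fun s => t + s) '' {s : ℤ | s ∈ S ∧ z + t + s ∉ S}).Finite :=
    hfinz.subset (fun x hx => hsub (Set.mem_insert_of_mem _ hx))
  have h1 : (insert 0 ((fun s => t + s) '' {s : ℤ | s ∈ S ∧ z + t + s ∉ S})).ncard
      = val S (z + t) + 1 := by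
    rw [Set.ncard_insert_of_notMem hnotmem hficard,
      Set.ncard_image_of_injective _ (add_right_injective t)]
    rfl
  calc val S (z + t) + 1 = _ := h1.symm
    _ ≤ val S z := Set.ncard_le_ncard hsub hfinz

/-- strict subadditivity when -h ∉ S and z ∉ S. -/
lemma val_add_strict (hS : IsNumericalSemigroup S) (hC : ∀ n : ℤ, C ≤ n → n ∈ S)
    {h z : ℤ} (hnh : -h ∉ S) (hz : z ∉ S) :
    val S (h + z) + 1 ≤ val S h + val S z := by
  obtain ⟨h0, hadd, hpos, -⟩ := hS
  set A := {s : ℤ | s ∈ S ∧ h + s ∉ S} with hA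
  set B := {s : ℤ | s ∈ S ∧ h + s ∈ S ∧ h + z + s ∉ S} with hB
  have hfinhz := valset_finite hpos hC (h + z)
  have hfinh := valset_finite hpos hC h
  have hfinz := valset_finite hpos hC z
  have hBfin : B.Finite := hfinhz.subset (fun s hs => ⟨hs.1, hs.2.2⟩)
  have hcover : {s : ℤ | s ∈ S ∧ h + z + s ∉ S} ⊆ A ∪ B := by
    rintro s ⟨hs, hhzs⟩
    by_cases hhs : h + s ∈ S
    · exact Or.inr ⟨hs, hhs, hhzs⟩
    · exact Or.inl ⟨hs, hhs⟩
  have step1 : val S (h + z) ≤ val S h + B.ncard := by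
    calc val S (h + z) ≤ (A ∪ B).ncard :=
          Set.ncard_le_ncard hcover (hfinh.union hBfin)
      _ ≤ val S h + B.ncard := Set.ncard_union_le _ _
  have hsub : insert 0 ((fun s => h + s) '' B) ⊆ {s : ℤ | s ∈ S ∧ z + s ∉ S} := by
    rintro x (rfl | ⟨s, ⟨hs, hhs, hhzs⟩, rfl⟩)
    · exact ⟨h0, by simpa using hz⟩
    · exact ⟨hhs, by rw [show z + (h + s) = h + z + s by ring]; exact hhzs⟩
  have hnotmem : (0 : ℤ) ∉ (fun s => h + s) '' B := by
    rintro ⟨s, ⟨hs, hhs, -⟩, hhs0⟩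
    have hhs0' : h + s = 0 := hhs0
    have hseq : s = -h := by omega
    exact hnh (hseq ▸ hs)
  have himfin : ((fun s => h + s) '' B).Finite := hBfin.image _
  have step2 : B.ncard + 1 ≤ val S z := by
    have hle := Set.ncard_le_ncard hsub hfinz
    rwa [Set.ncard_insert_of_notMem hnotmem himfin,
      Set.ncard_image_of_injective _ (add_right_injective h)] at hle
  omega

/-- the key counting identity: val S (-z) = val S z + z for z ≥ 0. -/
lemma val_neg_eq_aux (hS : IsNumericalSemigroup S) (hC0 : 0 ≤ C)
    (hC : ∀ n : ℤ, C ≤ n → n ∈ S) {z : ℤ} (hz : 0 ≤ z) :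
    val S (-z) = val S z + z.toNat := by
  obtain ⟨h0, hadd, hpos, -⟩ := hS
  set N := C + z with hN
  set W := S ∩ Set.Ico 0 N with hW
  have hWfin : W.Finite := (Set.finite_Ico 0 N).subset (Set.inter_subset_right)
  set Az := {s : ℤ | s ∈ S ∧ z + s ∉ S} with hAz
  set An := {s : ℤ | s ∈ S ∧ -z + s ∉ S} with hAn
  have hAzfin := valset_finite hpos hC z
  have hAnfin := valset_finite hpos hC (-z)
  set B := {s : ℤ | s ∈ W ∧ z + s ∈ S} with hB
  set B' := {s : ℤ | s ∈ W ∧ s - z ∈ S} with hB'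
  have hBfin : B.Finite := hWfin.subset (fun s hs => hs.1)
  have hB'fin : B'.Finite := hWfin.subset (fun s hs => hs.1)
  -- W = Az ⊔ B
  have hW1 : W = Az ∪ B := by
    ext s
    constructor
    · intro hs
      by_cases hzs : z + s ∈ S
      · exact Or.inr ⟨hs, hzs⟩
      · exact Or.inl ⟨hs.1, hzs⟩
    · rintro (⟨hs, hzs⟩ | ⟨hs, -⟩)
      · refine ⟨hs, Set.mem_Ico.mpr ⟨hpos s hs, ?_⟩⟩
        by_contra hlt
        exact hzs (hC _ (by omega))
      · exact hs
  have hdisj1 : Disjoint Az B := by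
    rw [Set.disjoint_left]; rintro s ⟨-, hzs⟩ ⟨-, hzs'⟩; exact hzs hzs'
  -- W = An ⊔ B'
  have hW2 : W = An ∪ B' := by
    ext s
    constructor
    · intro hs
      by_cases hzs : s - z ∈ S
      · exact Or.inr ⟨hs, hzs⟩
      · exact Or.inl ⟨hs.1, by rwa [show -z + s = s - z by ring]⟩
    · rintro (⟨hs, hzs⟩ | ⟨hs, -⟩)
      · refine ⟨hs, Set.mem_Ico.mpr ⟨hpos s hs, ?_⟩⟩
        by_contra hlt
        have : s - z ∈ S := hC _ (by omega)
        exact hzs (by rwa [show -z + s = s - z by ring])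
      · exact hs
  have hdisj2 : Disjoint An B' := by
    rw [Set.disjoint_left]; rintro s ⟨-, hzs⟩ ⟨-, hzs'⟩
    exact hzs (by rwa [show -z + s = s - z by ring])
  -- image of B under (· + z)
  have hD : (fun s => s + z) '' B = B' ∪ Set.Ico N (N + z) := by
    ext t
    constructor
    · rintro ⟨s, ⟨⟨hsS, hsIco⟩, hzs⟩, rfl⟩
      show s + z ∈ B' ∪ Set.Ico N (N + z)
      rw [Set.mem_Ico] at hsIco
      by_cases htN : s + z < N
      · left
        refine ⟨⟨by rwa [add_comm] at hzs, Set.mem_Ico.mpr ⟨by omega, htN⟩⟩, by simpa using hsS⟩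
      · right; exact Set.mem_Ico.mpr ⟨by omega, by omega⟩
    · rintro (⟨⟨htS, htIco⟩, htz⟩ | htIco)
      · rw [Set.mem_Ico] at htIco
        refine ⟨t - z, ⟨⟨htz, Set.mem_Ico.mpr ⟨hpos _ htz, by omega⟩⟩, ?_⟩, by ring⟩
        rw [show z + (t - z) = t by ring]; exact htS
      · rw [Set.mem_Ico] at htIco
        refine ⟨t - z, ⟨⟨hC _ (by omega), Set.mem_Ico.mpr ⟨by omega, by omega⟩⟩, ?_⟩, by ring⟩
        rw [show z + (t - z) = t by ring]; exact hC _ (by omega)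
  have hdisj3 : Disjoint B' (Set.Ico N (N + z)) := by
    rw [Set.disjoint_left]
    rintro s ⟨⟨-, hsIco⟩, -⟩ hsI
    rw [Set.mem_Ico] at hsIco hsI
    omega
  have hIcofin : (Set.Ico N (N + z)).Finite := Set.finite_Ico _ _
  have hIcocard : (Set.Ico N (N + z)).ncard = z.toNat := by
    rw [← Finset.coe_Ico, Set.ncard_coe_finset, Int.card_Ico]
    omega
  have hBcard : B.ncard = B'.ncard + z.toNat := by
    have him := Set.ncard_image_of_injective B (add_left_injective z)
    rw [hD, Set.ncard_union_eq hdisj3 hB'fin hIcofin, hIcocard] at him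
    omega
  have e1 : W.ncard = val S z + B.ncard := by
    rw [hW1, Set.ncard_union_eq hdisj1 hAzfin hBfin]; rfl
  have e2 : W.ncard = val S (-z) + B'.ncard := by
    rw [hW2, Set.ncard_union_eq hdisj2 hAnfin hB'fin]; rfl
  omega

lemma val_neg_eq (hS : IsNumericalSemigroup S) (hC0 : 0 ≤ C)
    (hC : ∀ n : ℤ, C ≤ n → n ∈ S) (h : ℤ) :
    (val S (-h) : ℤ) = (val S h : ℤ) + h := by
  rcases le_total 0 h with hh | hh
  · have := val_neg_eq_aux hS hC0 hC hh
    omega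
  · have := val_neg_eq_aux hS hC0 hC (show (0:ℤ) ≤ -h by omega)
    rw [neg_neg] at this
    omega

end Aux

theorem pseudoFrobenius_SigmaSet (S : Set ℤ) (hS : IsNumericalSemigroup S)
    (τ : ℤ × ℤ) :
    (τ ∉ SigmaZ S ∧
      ∀ σ ∈ SigmaZ S, σ ≠ 0 → τ + σ ∈ SigmaZ S ∧ τ + σ ≠ 0) ↔
    (∃ h : ℤ, h ∉ S ∧ -h ∉ S ∧
      τ + (1, 1) = ((val S (-h) : ℤ), (val S h : ℤ))) := by
  obtain ⟨C, hC0, hC⟩ := exists_conductor hS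
  obtain ⟨h0S, hadd, hpos, hfin⟩ := hS
  have hS' : IsNumericalSemigroup S := ⟨h0S, hadd, hpos, hfin⟩
  have hvneg := val_neg_eq hS' hC0 hC
  constructor
  · rintro ⟨hτ, hP⟩
    set x := τ.1 with hx
    set y := τ.2 with hy
    set h := x - y with hh
    set t := max C 1 with ht
    have htS : t ∈ S := hC _ (le_max_left _ _)
    have ht0 : (0:ℤ) < t := lt_of_lt_of_le one_pos (le_max_right _ _)
    -- σ = (t, 0)
    have hm1 : ((t : ℤ), (0 : ℤ)) ∈ SigmaZ S := by
      refine ⟨le_of_lt ht0, le_refl 0, ?_⟩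
      simp only [sub_zero]
      rw [val_eq_zero_of_mem hadd htS]
      simp
    have hn1 : ((t : ℤ), (0 : ℤ)) ≠ 0 := by
      intro hcon
      rw [Prod.ext_iff] at hcon
      simp only [Prod.fst_zero] at hcon
      omega
    have h1 : τ + (t, 0) ∈ SigmaZ S := (hP _ hm1 hn1).1
    have hy0 : 0 ≤ y := by simpa using h1.2.1
    -- σ = (0, t)
    have hm2 : ((0 : ℤ), (t : ℤ)) ∈ SigmaZ S := by
      refine ⟨le_refl 0, le_of_lt ht0, ?_⟩
      simp only [zero_sub]
      rw [hvneg t, val_eq_zero_of_mem hadd htS]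
      simp
    have hn2 : ((0 : ℤ), (t : ℤ)) ≠ 0 := by
      intro hcon
      rw [Prod.ext_iff] at hcon
      simp only [Prod.snd_zero] at hcon
      omega
    have h2 : τ + (0, t) ∈ SigmaZ S := (hP _ hm2 hn2).1
    have hx0 : 0 ≤ x := by simpa using h2.1
    -- σ = (1, 1)
    have hm3 : ((1 : ℤ), (1 : ℤ)) ∈ SigmaZ S := by
      refine ⟨zero_le_one, zero_le_one, ?_⟩
      rw [show (1:ℤ) - 1 = 0 by ring, val_eq_zero_of_mem hadd h0S]
      simp
    have hn3 : ((1 : ℤ), (1 : ℤ)) ≠ 0 := by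
      intro hcon
      rw [Prod.ext_iff] at hcon
      simp only [Prod.fst_zero] at hcon
      omega
    have h3 : τ + (1, 1) ∈ SigmaZ S := (hP _ hm3 hn3).1
    have h3' : (val S h : ℤ) ≤ y + 1 := by
      have hc := h3.2.2
      simp only [Prod.fst_add, Prod.snd_add] at hc
      rwa [show τ.1 + 1 - (τ.2 + 1) = h by rw [hh, hx, hy]; ring] at hc
    have hτ' : ¬ ((val S h : ℤ) ≤ y) := fun hcon => hτ ⟨hx0, hy0, hcon⟩
    have hvh : (val S h : ℤ) = y + 1 := by omega
    have hhS : h ∉ S := by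
      intro hmem
      rw [val_eq_zero_of_mem hadd hmem] at hvh
      omega
    have hvnh : (val S (-h) : ℤ) = x + 1 := by
      rw [hvneg h]; omega
    have hnhS : -h ∉ S := by
      intro hmem
      rw [val_eq_zero_of_mem hadd hmem] at hvnh
      omega
    refine ⟨h, hhS, hnhS, ?_⟩
    rw [Prod.ext_iff]
    simp only [Prod.fst_add, Prod.snd_add]
    constructor
    · omega
    · omega
  · rintro ⟨h, hhS, hnhS, heq⟩
    rw [Prod.ext_iff] at heq
    simp only [Prod.fst_add, Prod.snd_add] at heq
    obtain ⟨he1, he2⟩ := heq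
    have hvh1 : 1 ≤ val S h := val_pos_of_notMem hpos hC h0S hhS
    have hvnh1 : 1 ≤ val S (-h) := val_pos_of_notMem hpos hC h0S hnhS
    have hτ1 : τ.1 = (val S (-h) : ℤ) - 1 := by omega
    have hτ2 : τ.2 = (val S h : ℤ) - 1 := by omega
    have hdiff : τ.1 - τ.2 = h := by
      have := hvneg h
      omega
    constructor
    · rintro ⟨-, -, hval⟩
      rw [hdiff] at hval
      omega
    · rintro ⟨a, b⟩ hmem hσ0
      obtain ⟨ha0, hb0, hvab⟩ := hmem
      simp only at ha0 hb0 hvab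
      have hab0 : 0 < a ∨ 0 < b := by
        by_contra hcon
        push_neg at hcon
        have ha : a = 0 := by omega
        have hb : b = 0 := by omega
        exact hσ0 (Prod.mk_eq_zero.mpr ⟨ha, hb⟩)
      have key : (val S (h + (a - b)) : ℤ) ≤ (val S h : ℤ) - 1 + b := by
        by_cases hzS : a - b ∈ S
        · rcases eq_or_ne (a - b) 0 with hz0 | hz0
          · rw [hz0, add_zero]
            omega
          · have := val_add_lt hS' hC hhS hzS hz0
            omega
        · have := val_add_strict hS' hC hnhS hzS
          omega
      refine ⟨⟨?_, ?_, ?_⟩, ?_⟩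
      · simp only [Prod.fst_add]; omega
      · simp only [Prod.snd_add]; omega
      · simp only [Prod.fst_add, Prod.snd_add]
        rw [show τ.1 + a - (τ.2 + b) = h + (a - b) by omega]
        omega
      · intro hcon
        rw [Prod.ext_iff] at hcon
        simp only [Prod.fst_add, Prod.snd_add, Prod.fst_zero, Prod.snd_zero] at hcon
        omega
end

section
/- Let S be a numerical semigroup, Σ = {(a,b) ∈ ℕ² : val_S(a−b) ≤ b}, and T(Σ) = {τ ∈ ℤ² : τ ∉ Σ, τ + (Σ \ {(0,0)}) ⊆ Σ \ {(0,0)}}. Then Σ ∪ T(Σ) = {(a,b) ∈ ℕ² : val_S(a−b) ≤ b+1}. -/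
namespace SigmaAux

/-- The defining set for `val`. -/
def Aset (S : Set ℤ) (z : ℤ) : Set ℤ := {s : ℤ | s ∈ S ∧ z + s ∉ S}

lemma val_def (S : Set ℤ) (z : ℤ) : val S z = (Aset S z).ncard := rfl

variable {S : Set ℤ}

lemma aset_finite (hS : IsNumericalSemigroup S) (z : ℤ) : (Aset S z).Finite := by
  obtain ⟨h0, hadd, hpos, hG⟩ := hS
  apply Set.Finite.subset ((Set.finite_Ico 0 (-z)).union (hG.image (fun g => g - z)))
  rintro s ⟨hs, hzs⟩
  by_cases h : z + s < 0
  · exact Or.inl ⟨hpos s hs, by linarith⟩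
  · exact Or.inr ⟨z + s, ⟨by linarith, hzs⟩, by ring⟩

lemma val_eq_zero (hS : IsNumericalSemigroup S) {z : ℤ} (hz : z ∈ S) : val S z = 0 := by
  have h : Aset S z = ∅ := by
    ext s
    simp only [Aset, Set.mem_setOf_eq, Set.mem_empty_iff_false, iff_false, not_and, not_not]
    exact fun hs => hS.2.1 z hz s hs
  rw [val_def, h, Set.ncard_empty]

lemma val_pos (hS : IsNumericalSemigroup S) {z : ℤ} (hz : z ∉ S) : 0 < val S z := by
  rw [val_def]
  exact (Set.ncard_pos (aset_finite hS z)).mpr ⟨0, hS.1, by simpa using hz⟩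

lemma not_mem_of_val_pos (hS : IsNumericalSemigroup S) {z : ℤ} (hz : 0 < val S z) : z ∉ S :=
  fun h => by simp [val_eq_zero hS h] at hz

lemma mem_of_val_eq_zero (hS : IsNumericalSemigroup S) {z : ℤ} (hz : val S z = 0) : z ∈ S := by
  by_contra h
  have := val_pos hS h
  omega
  
/-- Subadditivity: `val (x+y) ≤ val x + val y`. -/
lemma val_subadd (hS : IsNumericalSemigroup S) (x y : ℤ) :
    val S (x + y) ≤ val S x + val S y := by
  set B := Aset S (x + y) ∩ {s | x + s ∈ S} with hB
  set C := Aset S (x + y) ∩ {s | x + s ∉ S} with hC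
  have hsplit : Aset S (x + y) = B ∪ C := by
    ext s; by_cases h : x + s ∈ S <;> simp [hB, hC, h]
  have hBcard : B.ncard ≤ val S y := by
    have himg : (fun s => x + s) '' B ⊆ Aset S y := by
      rintro _ ⟨s, ⟨⟨hsS, hxys⟩, hxs⟩, rfl⟩
      exact ⟨hxs, by rwa [show y + (x + s) = x + y + s by ring]⟩
    calc B.ncard = ((fun s => x + s) '' B).ncard :=
          (Set.ncard_image_of_injective B (add_right_injective x)).symm
      _ ≤ (Aset S y).ncard := Set.ncard_le_ncard himg (aset_finite hS y)
  have hCcard : C.ncard ≤ val S x := by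
    refine Set.ncard_le_ncard ?_ (aset_finite hS x)
    rintro s ⟨⟨hsS, _⟩, hxs⟩
    exact ⟨hsS, hxs⟩
  calc val S (x + y) = (B ∪ C).ncard := by rw [val_def, hsplit]
    _ ≤ B.ncard + C.ncard := Set.ncard_union_le B C
    _ ≤ val S y + val S x := Nat.add_le_add hBcard hCcard
    _ = val S x + val S y := Nat.add_comm _ _

/-- Strict subadditivity when `-x ∉ S` and `y ∉ S`. -/
lemma val_subadd_strict (hS : IsNumericalSemigroup S) {x y : ℤ} (hx : -x ∉ S) (hy : y ∉ S) :
    val S (x + y) < val S x + val S y := by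
  set B := Aset S (x + y) ∩ {s | x + s ∈ S} with hB
  set C := Aset S (x + y) ∩ {s | x + s ∉ S} with hC
  have hsplit : Aset S (x + y) = B ∪ C := by
    ext s; by_cases h : x + s ∈ S <;> simp [hB, hC, h]
  have h0y : (0 : ℤ) ∈ Aset S y := ⟨hS.1, by simpa using hy⟩
  have hBcard : B.ncard ≤ val S y - 1 := by
    have himg : (fun s => x + s) '' B ⊆ Aset S y \ {0} := by
      rintro _ ⟨s, ⟨⟨hsS, hxys⟩, hxs⟩, rfl⟩
      refine ⟨⟨hxs, by rwa [show y + (x + s) = x + y + s by ring]⟩, ?_⟩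
      simp only [Set.mem_singleton_iff]
      intro h
      exact hx (by rwa [show -x = s by linarith])
    calc B.ncard = ((fun s => x + s) '' B).ncard :=
          (Set.ncard_image_of_injective B (add_right_injective x)).symm
      _ ≤ (Aset S y \ {0}).ncard :=
          Set.ncard_le_ncard himg ((aset_finite hS y).diff)
      _ = val S y - 1 := by
          rw [Set.ncard_diff_singleton_of_mem h0y, val_def]
  have hCcard : C.ncard ≤ val S x := by
    refine Set.ncard_le_ncard ?_ (aset_finite hS x)
    rintro s ⟨⟨hsS, _⟩, hxs⟩
    exact ⟨hsS, hxs⟩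
  have hy1 : 1 ≤ val S y := val_pos hS hy
  have : val S (x + y) ≤ (val S y - 1) + val S x := by
    calc val S (x + y) = (B ∪ C).ncard := by rw [val_def, hsplit]
      _ ≤ B.ncard + C.ncard := Set.ncard_union_le B C
      _ ≤ (val S y - 1) + val S x := Nat.add_le_add hBcard hCcard
  omega

/-- Adding a positive element of `S` strictly decreases positive valency. -/
lemma val_add_mem_lt (hS : IsNumericalSemigroup S) {x m : ℤ} (hx : x ∉ S)
    (hm : m ∈ S) (hm0 : 0 < m) : val S (x + m) < val S x := by
  obtain ⟨h0, hadd, hpos, hG⟩ := hS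
  obtain ⟨s₀, hs₀, hmin⟩ := Set.exists_min_image (Aset S x) id (aset_finite ⟨h0, hadd, hpos, hG⟩ x)
    ⟨0, h0, by simpa using hx⟩
  have himg : (fun s => s + m) '' Aset S (x + m) ⊆ Aset S x \ {s₀} := by
    rintro _ ⟨s, ⟨hsS, hxms⟩, rfl⟩
    have hsm : s + m ∈ S := hadd s hsS m hm
    have hmem : s + m ∈ Aset S x := ⟨hsm, by rwa [show x + (s + m) = x + m + s by ring]⟩
    refine ⟨hmem, ?_⟩
    simp only [Set.mem_singleton_iff]
    intro heq
    have hxs : x + s ∈ S := by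
      by_contra hxs
      have : s ∈ Aset S x := ⟨hsS, hxs⟩
      have := hmin s this
      simp only [id] at this
      omega
    exact hxms (by rw [show x + m + s = (x + s) + m by ring]; exact hadd _ hxs m hm)
  have h1 : val S (x + m) ≤ val S x - 1 := by
    calc val S (x + m) = ((fun s => s + m) '' Aset S (x + m)).ncard :=
          (Set.ncard_image_of_injective _ (add_left_injective m)).symm
      _ ≤ (Aset S x \ {s₀}).ncard :=
          Set.ncard_le_ncard himg ((aset_finite ⟨h0, hadd, hpos, hG⟩ x).diff)
      _ = val S x - 1 := by
          rw [Set.ncard_diff_singleton_of_mem hs₀, val_def]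
  have h2 : 0 < val S x := val_pos ⟨h0, hadd, hpos, hG⟩ hx
  omega

lemma nat_mul_mem (hS : IsNumericalSemigroup S) {m : ℤ} (hm : m ∈ S) (k : ℕ) :
    (k : ℤ) * m ∈ S := by
  induction k with
  | zero => simpa using hS.1
  | succ n ih =>
      have h := hS.2.1 _ ih m hm
      push_cast
      rwa [show ((n : ℤ) + 1) * m = (n : ℤ) * m + m by ring]

/-- For `m ∈ S` positive, `val (-m) ≤ m`. -/
lemma val_neg_le (hS : IsNumericalSemigroup S) {m : ℤ} (hm : m ∈ S) (hm0 : 0 < m) :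
    (val S (-m) : ℤ) ≤ m := by
  have hinj : Set.InjOn (fun s => s % m) (Aset S (-m)) := by
    intro s hs s' hs' h
    simp only at h
    rcases le_total s s' with hle | hle
    · by_contra hne
      have hdvd : m ∣ s' - s := Int.ModEq.dvd h
      obtain ⟨k, hk⟩ := hdvd
      have hk1 : 1 ≤ k := by nlinarith [lt_of_le_of_ne hle hne]
      have hkn : ((k - 1).toNat : ℤ) = k - 1 := Int.toNat_of_nonneg (by omega)
      have hmem : s + ((k - 1).toNat : ℤ) * m ∈ S :=
        hS.2.1 s hs.1 _ (nat_mul_mem hS hm (k - 1).toNat)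
      rw [hkn] at hmem
      exact hs'.2 (by rw [show -m + s' = s + (k - 1) * m by linarith]; exact hmem)
    · by_contra hne
      have hdvd : m ∣ s - s' := Int.ModEq.dvd (Int.ModEq.symm h)
      obtain ⟨k, hk⟩ := hdvd
      have hk1 : 1 ≤ k := by nlinarith [lt_of_le_of_ne hle (Ne.symm hne)]
      have hkn : ((k - 1).toNat : ℤ) = k - 1 := Int.toNat_of_nonneg (by omega)
      have hmem : s' + ((k - 1).toNat : ℤ) * m ∈ S :=
        hS.2.1 s' hs'.1 _ (nat_mul_mem hS hm (k - 1).toNat)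
      rw [hkn] at hmem
      exact hs.2 (by rw [show -m + s = s' + (k - 1) * m by linarith]; exact hmem)
  have himg : (fun s => s % m) '' Aset S (-m) ⊆ Set.Ico 0 m := by
    rintro _ ⟨s, _, rfl⟩
    exact ⟨Int.emod_nonneg s (by omega), Int.emod_lt_of_pos s hm0⟩
  have hIco : (Set.Ico (0:ℤ) m).ncard = m.toNat := by
    rw [← Finset.coe_Ico, Set.ncard_coe_finset, Int.card_Ico]
    simp
  have h1 : val S (-m) ≤ m.toNat := by
    calc val S (-m) = ((fun s => s % m) '' Aset S (-m)).ncard :=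
          (Set.ncard_image_of_injOn hinj).symm
      _ ≤ (Set.Ico (0:ℤ) m).ncard :=
          Set.ncard_le_ncard himg (Set.finite_Ico 0 m)
      _ = m.toNat := hIco
  omega

lemma exists_pos_mem (hS : IsNumericalSemigroup S) : ∃ N : ℤ, N ∈ S ∧ 0 < N := by
  by_contra h
  push_neg at h
  have hsub : Set.Ici (1 : ℤ) ⊆ {n : ℤ | 0 ≤ n ∧ n ∉ S} := by
    intro n hn
    simp only [Set.mem_Ici] at hn
    refine ⟨by omega, fun hmem => ?_⟩
    have := h n hmem
    omega
  exact (Set.Ici_infinite (1:ℤ)) (hS.2.2.2.subset hsub)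

end SigmaAux

open SigmaAux in
theorem SigmaSet_union_T (S : Set ℤ) (hS : IsNumericalSemigroup S) :
    SigmaZ S ∪ {τ : ℤ × ℤ | τ ∉ SigmaZ S ∧
        ∀ σ ∈ SigmaZ S, σ ≠ 0 → τ + σ ∈ SigmaZ S ∧ τ + σ ≠ 0} =
      {z : ℤ × ℤ | 0 ≤ z.1 ∧ 0 ≤ z.2 ∧
        (val S (z.1 - z.2) : ℤ) ≤ z.2 + 1} := by
  have hval0 : val S 0 = 0 := val_eq_zero hS hS.1
  ext ⟨a, b⟩
  simp only [Set.mem_union, Set.mem_setOf_eq, SigmaZ]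
  constructor
  · rintro (⟨ha, hb, hv⟩ | ⟨hnot, hT⟩)
    · exact ⟨ha, hb, by linarith⟩
    · obtain ⟨N, hN, hN0⟩ := exists_pos_mem hS
      have hσ1 : ((N, 0) : ℤ × ℤ) ∈ SigmaZ S := by
        refine ⟨le_of_lt hN0, le_refl 0, ?_⟩
        simp only
        rw [show N - 0 = N by ring, val_eq_zero hS hN]
        simp
      have hσ2 : ((0, N) : ℤ × ℤ) ∈ SigmaZ S := by
        refine ⟨le_refl 0, le_of_lt hN0, ?_⟩
        simp only
        rw [show (0:ℤ) - N = -N by ring]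
        exact val_neg_le hS hN hN0
      have hσ3 : ((1, 1) : ℤ × ℤ) ∈ SigmaZ S := by
        refine ⟨by norm_num, by norm_num, ?_⟩
        simp only
        rw [show (1:ℤ) - 1 = 0 by ring, hval0]
        norm_num
      have h1 := (hT (N, 0) hσ1 (by simp [Prod.ext_iff]; omega)).1
      have h2 := (hT (0, N) hσ2 (by simp [Prod.ext_iff]; omega)).1
      have h3 := (hT (1, 1) hσ3 (by simp [Prod.ext_iff])).1
      obtain ⟨h1a, h1b, _⟩ := h1
      obtain ⟨h2a, h2b, _⟩ := h2
      obtain ⟨_, _, h3v⟩ := h3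
      simp only [Prod.fst_add, Prod.snd_add] at h1a h1b h2a h2b h3v
      refine ⟨by linarith, by linarith, ?_⟩
      rwa [show a + 1 - (b + 1) = a - b by ring] at h3v
  · rintro ⟨ha, hb, hv⟩
    by_cases hle : (val S (a - b) : ℤ) ≤ b
    · exact Or.inl ⟨ha, hb, hle⟩
    · right
      push_neg at hle
      have hval : (val S (a - b) : ℤ) = b + 1 := le_antisymm hv (by omega)
      have hxnot : a - b ∉ S := not_mem_of_val_pos hS (by omega)
      have hnx : -(a - b) ∉ S := by
        intro hmem
        rcases lt_trichotomy (a - b) 0 with h | h | h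
        · have := val_neg_le hS hmem (by omega)
          rw [neg_neg] at this
          omega
        · rw [h, hval0] at hval
          omega
        · have := hS.2.2.1 _ hmem
          omega
      refine ⟨fun h => absurd h.2.2 (by omega), ?_⟩
      rintro ⟨c, d⟩ ⟨hc, hd, hvcd⟩ hne
      dsimp only at hvcd
      have hne' : ¬(c = 0 ∧ d = 0) := by
        intro ⟨h1, h2⟩; exact hne (by simp [Prod.ext_iff, h1, h2])
      have hkey : (val S ((a + c) - (b + d)) : ℤ) ≤ b + d := by
        rw [show a + c - (b + d) = (a - b) + (c - d) by ring]
        by_cases hd0 : d = 0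
        · -- c > 0, c ∈ S
          subst hd0
          have hc0 : 0 < c := by omega
          have hcS : c ∈ S := by
            have : val S (c - 0) = 0 := by omega
            rw [show c - 0 = c by ring] at this
            exact mem_of_val_eq_zero hS this
          have := val_add_mem_lt hS hxnot hcS hc0
          rw [show c - 0 = c by ring]
          omega
        · by_cases hyS : c - d ∈ S
          · have h1 := val_subadd hS (a - b) (c - d)
            have h2 : val S (c - d) = 0 := val_eq_zero hS hyS
            omega
          · have h1 := val_subadd_strict hS hnx hyS
            omega
      constructor
      · rw [Prod.mk_add_mk]
        exact ⟨show (0:ℤ) ≤ a + c by linarith, show (0:ℤ) ≤ b + d by linarith, hkey⟩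
      · rw [Prod.mk_add_mk]
        intro h
        rw [Prod.ext_iff] at h
        simp only [Prod.fst_zero, Prod.snd_zero] at h
        omega
end

section
/- Let S be a numerical semigroup of maximal embedding dimension with multiplicity e and blowup S_1 = (S \ {0}) − e. Let Σ = {(a,b) ∈ ℕ² : val_S(a−b) ≤ b} and Σ₁ = {(a,b) ∈ ℕ² : val_{S_1}(a−b) ≤ b}. Then for all a, b ∈ ℕ, (a,b) ∈ Σ₁ if and only if (a+1, b+1) ∈ Σ. -/
lemma valset_finite_s15 (T : Set ℤ) (hT : IsNumericalSemigroup T) (z : ℤ) :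
    {s : ℤ | s ∈ T ∧ z + s ∉ T}.Finite := by
  obtain ⟨h0, hadd, hpos, hfin⟩ := hT
  have hsub : {s : ℤ | s ∈ T ∧ z + s ∉ T} ⊆
      Set.Ico 0 (-z) ∪ ((z + ·) ⁻¹' {n : ℤ | 0 ≤ n ∧ n ∉ T}) := by
    rintro s ⟨hs, hzs⟩
    rcases lt_or_ge (z + s) 0 with h | h
    · left; exact ⟨hpos s hs, by linarith⟩
    · right; exact ⟨h, hzs⟩
  exact ((Set.finite_Ico _ _).union (hfin.preimage (add_right_injective z).injOn)).subset hsub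

lemma add_nsmul_mem (T : Set ℤ) (hadd : ∀ a ∈ T, ∀ b ∈ T, a + b ∈ T)
    {t n : ℤ} (ht : t ∈ T) (hn : n ∈ T) (k : ℕ) : t + n * k ∈ T := by
  induction k with
  | zero => simpa using ht
  | succ m ih =>
      have h2 := hadd _ ih _ hn
      have h : t + n * (m + 1 : ℕ) = t + n * m + n := by push_cast; ring
      rwa [h]

/-- If `n ∈ T` and `0 < n`, then `val T (-n) ≤ n`. -/
lemma val_neg_le (T : Set ℤ) (hT : IsNumericalSemigroup T) {n : ℤ} (hn : n ∈ T)
    (hn0 : 0 < n) : (val T (-n) : ℤ) ≤ n := by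
  obtain ⟨h0, hadd, hpos, hfin⟩ := hT
  have hmaps : ∀ t ∈ {s : ℤ | s ∈ T ∧ -n + s ∉ T}, t % n ∈ Set.Ico (0:ℤ) n :=
    fun t _ => ⟨Int.emod_nonneg t hn0.ne', Int.emod_lt_of_pos t hn0⟩
  have hinj : Set.InjOn (· % n) {s : ℤ | s ∈ T ∧ -n + s ∉ T} := by
    intro t ht t' ht' hmod
    by_contra hne
    wlog hlt : t < t' generalizing t t'
    · exact this ht' ht hmod.symm (Ne.symm hne) (by omega)
    have hmeq : t ≡ t' [ZMOD n] := hmod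
    obtain ⟨k, hk⟩ : n ∣ t' - t := Int.ModEq.dvd hmeq
    have hk1 : (1:ℤ) ≤ k := by
      rcases le_or_gt 1 k with h | h
      · exact h
      · exfalso; nlinarith
    have h2 := add_nsmul_mem T hadd ht.1 hn (k - 1).toNat
    rw [Int.toNat_of_nonneg (by omega : (0:ℤ) ≤ k - 1)] at h2
    have heq : t + n * (k - 1) = -n + t' := by
      rw [mul_sub, mul_one, ← hk]; ring
    rw [heq] at h2
    exact ht'.2 h2
  have hcard : ({s : ℤ | s ∈ T ∧ -n + s ∉ T}).ncard ≤ (Set.Ico (0:ℤ) n).ncard :=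
    Set.ncard_le_ncard_of_injOn _ hmaps hinj (Set.finite_Ico _ _)
  have hIco : (Set.Ico (0:ℤ) n).ncard = (n - 0).toNat := by
    rw [← Finset.coe_Ico, Set.ncard_coe_finset, Int.card_Ico]
  unfold val
  omega

theorem SigmaSet_blowup (S : Set ℤ) (hS : IsNumericalSemigroup S)
    (e : ℤ) (he : e ∈ S) (he0 : 0 < e) (hemin : ∀ s ∈ S, 0 < s → e ≤ s)
    (S₁ : Set ℤ) (hS₁ : S₁ = (fun m => m - e) '' (S \ {0}))
    (hMED : IsNumericalSemigroup S₁)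
    (a b : ℕ) :
    (a, b) ∈ SigmaSet S₁ ↔ (a + 1, b + 1) ∈ SigmaSet S := by
  obtain ⟨h0, hadd, hpos, hfin⟩ := hS
  obtain ⟨h0', hadd', hpos', hfin'⟩ := hMED
  set z : ℤ := (a : ℤ) - b with hz
  -- membership in S₁
  have memS₁ : ∀ t : ℤ, t ∈ S₁ ↔ (t + e ∈ S ∧ t + e ≠ 0) := by
    intro t
    rw [hS₁]
    constructor
    · rintro ⟨m, ⟨hm, hm0⟩, rfl⟩
      simp only [Set.mem_singleton_iff] at hm0
      constructor
      · simpa using hm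
      · simpa using hm0
    · rintro ⟨h1, h2⟩
      exact ⟨t + e, ⟨h1, by simpa using h2⟩, by ring⟩
  -- S ⊆ S₁
  have hsub : S ⊆ S₁ := by
    intro s hs
    rcases eq_or_ne s 0 with rfl | hs0
    · exact h0'
    · rw [memS₁]
      have hse : s + e ∈ S := hadd s hs e he
      refine ⟨hse, ?_⟩
      have := hpos s hs
      omega
  -- the two val sets
  set A : Set ℤ := {s : ℤ | s ∈ S ∧ z + s ∉ S} with hA
  set A₁ : Set ℤ := {t : ℤ | t ∈ S₁ ∧ z + t ∉ S₁} with hA₁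
  have hfinA : A.Finite := valset_finite_s15 S ⟨h0, hadd, hpos, hfin⟩ z
  have hfinA₁ : A₁.Finite := valset_finite_s15 S₁ ⟨h0', hadd', hpos', hfin'⟩ z
  -- upper bound: val S z ≤ val S₁ z + 1
  have hupper : val S z ≤ val S₁ z + 1 := by
    have hsubA : A ⊆ insert 0 ((· + e) '' A₁) := by
      rintro s ⟨hs, hzs⟩
      rcases eq_or_ne s 0 with rfl | hs0
      · exact Set.mem_insert _ _
      · right
        refine ⟨s - e, ⟨?_, ?_⟩, by ring⟩
        · rw [memS₁]; simpa [sub_add_cancel] using ⟨hs, hs0⟩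
        · intro hc
          rw [memS₁] at hc
          exact hzs (by have := hc.1; rwa [show z + (s - e) + e = z + s by ring] at this)
    calc val S z = A.ncard := rfl
      _ ≤ (insert 0 ((· + e) '' A₁)).ncard := by
          refine Set.ncard_le_ncard hsubA ?_
          exact ((hfinA₁.image _).insert 0)
      _ ≤ ((· + e) '' A₁).ncard + 1 := Set.ncard_insert_le _ _
      _ = A₁.ncard + 1 := by rw [Set.ncard_image_of_injective _ (add_left_injective e)]
      _ = val S₁ z + 1 := rfl
  simp only [SigmaSet, Set.mem_setOf_eq, Nat.cast_add, Nat.cast_one]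
  rw [show (a:ℤ) + 1 - ((b:ℤ) + 1) = (a:ℤ) - (b:ℤ) from by ring, ← hz]
  constructor
  · intro h
    omega
  · intro h
    by_cases hzS : z ∈ S
    · -- A₁ is empty
      have : A₁ = ∅ := by
        ext t
        simp only [hA₁, Set.mem_setOf_eq, Set.mem_empty_iff_false, iff_false, not_and, not_not]
        intro ht
        exact hadd' z (hsub hzS) t ht
      have : val S₁ z = 0 := by rw [val, ← hA₁, this, Set.ncard_empty]
      omega
    · by_cases hc : -e - z ∈ S₁
      · -- z ≤ -e, and -z ∈ S₁, use val_neg_le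
        have hez : 0 ≤ -e - z := hpos' _ hc
        have hnz : -z ∈ S₁ := by
          have hx := hadd' e (hsub he) (-e - z) hc
          rwa [show e + (-e - z) = -z from by ring] at hx
        have hb : -z ≤ (b : ℤ) := by omega
        have hval := val_neg_le S₁ ⟨h0', hadd', hpos', hfin'⟩ hnz (by omega)
        rw [neg_neg] at hval
        omega
      · -- val S₁ z + 1 ≤ val S z
        have hzS' : z ∉ S := hzS
        have hsubA : insert 0 ((· + e) '' A₁) ⊆ A := by
          rintro s hs
          rcases hs with rfl | ⟨t, ⟨htS₁, htz⟩, rfl⟩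
          · exact ⟨h0, by simpa using hzS'⟩
          · have hte : t + e ∈ S := ((memS₁ t).mp htS₁).1
            refine ⟨hte, ?_⟩
            intro hcon
            rcases eq_or_ne (z + (t + e)) 0 with h9 | h9
            · exact hc (by rw [show -e - z = t from by linarith]; exact htS₁)
            · exact htz ((memS₁ (z + t)).mpr
                ⟨by rwa [show z + t + e = z + (t + e) from by ring], by omega⟩)
        have hlow : val S₁ z + 1 ≤ val S z := by
          have h0nm : (0:ℤ) ∉ (· + e) '' A₁ := by
            rintro ⟨t, ht, hte⟩
            have := hpos' t ht.1
            simp only at hte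
            omega
          calc val S₁ z + 1 = A₁.ncard + 1 := rfl
            _ = ((· + e) '' A₁).ncard + 1 := by
                rw [Set.ncard_image_of_injective _ (add_left_injective e)]
            _ = (insert 0 ((· + e) '' A₁)).ncard := by
                rw [Set.ncard_insert_of_notMem h0nm (hfinA₁.image _)]
            _ ≤ A.ncard := Set.ncard_le_ncard hsubA hfinA
            _ = val S z := rfl
        omega
end

section
/- Let S ≠ ℕ be a numerical semigroup with Frobenius number g, ν minimal generators, and δ = |ℕ \ S| gaps, and let μ = 2ν + 1 + 2δ. Then g + 6 ≤ μ ≤ 4g + 3; moreover μ = g + 6 if and only if ν = 2, and μ = 4g + 3 if and only if S = ⟨g+1, g+2, ..., 2g+1⟩. -/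
namespace MuAux

/-- The set of minimal generators (atoms) of `S`. -/
def Atoms (S : Set ℤ) : Set ℤ :=
  (S \ {0}) \ {z : ℤ | ∃ a ∈ S \ {0}, ∃ b ∈ S \ {0}, a + b = z}

theorem zmul_mem {S : Set ℤ} (h0 : (0:ℤ) ∈ S) (hadd : ∀ a ∈ S, ∀ b ∈ S, a + b ∈ S)
    {x a : ℤ} (hx : 0 ≤ x) (ha : a ∈ S) : x * a ∈ S := by
  refine Int.le_induction (motive := fun n _ => n * a ∈ S) ?_ ?_ x hx
  · simpa using h0
  · intro n hn ih
    have := hadd _ ih _ ha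
    rw [add_mul, one_mul]
    exact this

theorem S_eq_of_one_mem {S : Set ℤ} (h0 : (0:ℤ) ∈ S)
    (hadd : ∀ a ∈ S, ∀ b ∈ S, a + b ∈ S) (hpos : ∀ s ∈ S, 0 ≤ s)
    (h1 : (1:ℤ) ∈ S) : S = {z : ℤ | 0 ≤ z} := by
  ext z
  constructor
  · exact fun hz => hpos z hz
  · intro hz
    have := zmul_mem h0 hadd hz h1
    simpa using this

theorem mem_closure_atoms {S : Set ℤ} (hpos : ∀ s ∈ S, 0 ≤ s) :
    ∀ s ∈ S, s ∈ AddSubmonoid.closure (Atoms S) := by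
  intro s hs
  obtain ⟨n, hn⟩ : ∃ n, s.natAbs = n := ⟨_, rfl⟩
  induction n using Nat.strong_induction_on generalizing s with
  | _ n ih =>
    rcases eq_or_ne s 0 with rfl | hs0
    · exact zero_mem _
    by_cases hA : s ∈ Atoms S
    · exact AddSubmonoid.subset_closure hA
    · have hsum : ∃ a ∈ S \ {0}, ∃ b ∈ S \ {0}, a + b = s := by
        by_contra h'
        exact hA ⟨⟨hs, hs0⟩, h'⟩
      obtain ⟨a, ⟨haS, ha0⟩, b, ⟨hbS, hb0⟩, hab⟩ := hsum
      have ha0' : a ≠ 0 := ha0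
      have hb0' : b ≠ 0 := hb0
      have ha1 : 0 ≤ a := hpos a haS
      have hb1 : 0 ≤ b := hpos b hbS
      have h1 : a.natAbs < n := by omega
      have h2 : b.natAbs < n := by omega
      rw [← hab]
      exact add_mem (ih _ h1 a haS rfl) (ih _ h2 b hbS rfl)

theorem closure_atoms_le {S : Set ℤ} (h0 : (0:ℤ) ∈ S)
    (hadd : ∀ a ∈ S, ∀ b ∈ S, a + b ∈ S) :
    ∀ x ∈ AddSubmonoid.closure (Atoms S), x ∈ S := by
  intro x hx
  induction hx using AddSubmonoid.closure_induction with
  | mem y hy => exact hy.1.1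
  | zero => exact h0
  | add a b _ _ ha hb => exact hadd a ha b hb
theorem atoms_subset_Icc {S : Set ℤ} {g : ℤ} (hpos : ∀ s ∈ S, 0 ≤ s)
    (hg' : ∀ z : ℤ, 0 ≤ z → g < z → z ∈ S) (hg1 : 1 ≤ g) :
    Atoms S ⊆ Set.Icc 1 (2*g+1) := by
  rintro x ⟨⟨hxS, hx0⟩, hxna⟩
  have hx0' : x ≠ 0 := hx0
  have h1 : 1 ≤ x := by have := hpos x hxS; omega
  refine ⟨h1, ?_⟩
  by_contra hlt
  push_neg at hlt
  exact hxna ⟨g+1, ⟨hg' _ (by omega) (by omega), by simp; omega⟩,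
    x - (g+1), ⟨hg' _ (by omega) (by omega), by simp; omega⟩, by ring⟩

theorem atoms_finite {S : Set ℤ} {g : ℤ} (hpos : ∀ s ∈ S, 0 ≤ s)
    (hg' : ∀ z : ℤ, 0 ≤ z → g < z → z ∈ S) (hg1 : 1 ≤ g) : (Atoms S).Finite :=
  (Set.finite_Icc 1 (2*g+1)).subset (atoms_subset_Icc hpos hg' hg1)

theorem count_partition {S : Set ℤ} {g : ℤ}
    (hg' : ∀ z : ℤ, 0 ≤ z → g < z → z ∈ S) :
    (S ∩ Set.Icc 0 g).ncard + {z : ℤ | 0 ≤ z ∧ z ∉ S}.ncard = (g+1).toNat := by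
  have hGsub : {z : ℤ | 0 ≤ z ∧ z ∉ S} ⊆ Set.Icc 0 g := by
    rintro z ⟨hz0, hzS⟩
    refine ⟨hz0, ?_⟩
    by_contra h
    push_neg at h
    exact hzS (hg' z hz0 h)
  have hfinI : (Set.Icc (0:ℤ) g).Finite := Set.finite_Icc _ _
  have hT : (S ∩ Set.Icc 0 g).Finite := hfinI.subset Set.inter_subset_right
  have hG : {z : ℤ | 0 ≤ z ∧ z ∉ S}.Finite := hfinI.subset hGsub
  have hunion : S ∩ Set.Icc 0 g ∪ {z : ℤ | 0 ≤ z ∧ z ∉ S} = Set.Icc 0 g := by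
    ext z
    simp only [Set.mem_union, Set.mem_inter_iff, Set.mem_Icc, Set.mem_setOf_eq]
    constructor
    · rintro (⟨_, h⟩ | ⟨h1, h2⟩)
      · exact h
      · refine ⟨h1, ?_⟩
        by_contra hc
        push_neg at hc
        exact h2 (hg' z h1 hc)
    · rintro ⟨h1, h2⟩
      by_cases hz : z ∈ S
      · exact Or.inl ⟨hz, h1, h2⟩
      · exact Or.inr ⟨h1, hz⟩
  have hdisj : Disjoint (S ∩ Set.Icc 0 g) {z : ℤ | 0 ≤ z ∧ z ∉ S} := by
    rw [Set.disjoint_left]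
    rintro z ⟨hz, _⟩ ⟨_, hz'⟩
    exact hz' hz
  have hcard := Set.ncard_union_eq hdisj hT hG
  rw [hunion] at hcard
  rw [← hcard, ← Finset.coe_Icc, Set.ncard_coe_finset, Int.card_Icc]
  norm_num

theorem T_le_G {S : Set ℤ} {g : ℤ} (hadd : ∀ a ∈ S, ∀ b ∈ S, a + b ∈ S)
    (hfin : {n : ℤ | 0 ≤ n ∧ n ∉ S}.Finite) (hg : g ∉ S) :
    (S ∩ Set.Icc 0 g).ncard ≤ {z : ℤ | 0 ≤ z ∧ z ∉ S}.ncard := by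
  have himg : (fun x => g - x) '' (S ∩ Set.Icc 0 g) ⊆ {z : ℤ | 0 ≤ z ∧ z ∉ S} := by
    rintro _ ⟨x, ⟨hxS, hx0, hxg⟩, rfl⟩
    simp only [Set.mem_setOf_eq]
    refine ⟨by omega, fun hc => hg ?_⟩
    have := hadd x hxS _ hc
    simpa using this
  calc (S ∩ Set.Icc 0 g).ncard
      = ((fun x => g - x) '' (S ∩ Set.Icc 0 g)).ncard :=
        (Set.ncard_image_of_injOn (fun x _ y _ h => by omega)).symm
    _ ≤ _ := Set.ncard_le_ncard himg hfin

theorem atoms_ncard_le {S : Set ℤ} {g : ℤ} (h0 : (0:ℤ) ∈ S)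
    (hadd : ∀ a ∈ S, ∀ b ∈ S, a + b ∈ S) (hpos : ∀ s ∈ S, 0 ≤ s)
    (hg' : ∀ z : ℤ, 0 ≤ z → g < z → z ∈ S) (hg1 : 1 ≤ g) :
    (Atoms S).ncard ≤ (g+1).toNat := by
  have hm : (0:ℤ) < g+1 := by omega
  have key : ∀ x ∈ Atoms S, ∀ y ∈ Atoms S, x < y → x % (g+1) ≠ y % (g+1) := by
    intro x hx y hy hxy hmod
    have hdvd : (g+1) ∣ y - x := Int.ModEq.dvd hmod
    obtain ⟨k, hk⟩ := hdvd
    have hk1 : 1 ≤ k := by nlinarith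
    have hkm : (g+1)*k ∈ S := by
      rw [mul_comm]
      exact zmul_mem h0 hadd (by omega) (hg' _ (by omega) (by omega))
    have hkm0 : (g+1)*k ≠ 0 := by nlinarith
    have hx0 : x ≠ 0 := hx.1.2
    exact hy.2 ⟨x, ⟨hx.1.1, hx0⟩, (g+1)*k, ⟨hkm, hkm0⟩, by omega⟩
  have hinj : Set.InjOn (fun x => x % (g+1)) (Atoms S) := by
    intro x hx y hy h
    rcases lt_trichotomy x y with h' | h' | h'
    · exact absurd h (key x hx y hy h')
    · exact h'
    · exact absurd h.symm (key y hy x hx h')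
  calc (Atoms S).ncard
      = ((fun x => x % (g+1)) '' Atoms S).ncard := (Set.ncard_image_of_injOn hinj).symm
    _ ≤ (Set.Ico (0:ℤ) (g+1)).ncard := by
        refine Set.ncard_le_ncard ?_ (Set.finite_Ico _ _)
        rintro _ ⟨x, _, rfl⟩
        exact ⟨Int.emod_nonneg x (by omega), Int.emod_lt_of_pos x hm⟩
    _ = (g+1).toNat := by
        rw [← Finset.coe_Ico, Set.ncard_coe_finset, Int.card_Ico]
        norm_num

theorem two_le_atoms_ncard {S : Set ℤ} {g : ℤ} (h0 : (0:ℤ) ∈ S)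
    (hadd : ∀ a ∈ S, ∀ b ∈ S, a + b ∈ S) (hpos : ∀ s ∈ S, 0 ≤ s)
    (hSne : S ≠ {z : ℤ | 0 ≤ z})
    (hg' : ∀ z : ℤ, 0 ≤ z → g < z → z ∈ S) (hg1 : 1 ≤ g) :
    2 ≤ (Atoms S).ncard := by
  have hAfin := atoms_finite hpos hg' hg1
  have hmem1 : g+1 ∈ AddSubmonoid.closure (Atoms S) :=
    mem_closure_atoms hpos _ (hg' _ (by omega) (by omega))
  have hmem2 : g+2 ∈ AddSubmonoid.closure (Atoms S) :=
    mem_closure_atoms hpos _ (hg' _ (by omega) (by omega))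
  by_contra hlt
  push_neg at hlt
  have : (Atoms S).ncard = 0 ∨ (Atoms S).ncard = 1 := by omega
  rcases this with h | h
  · have hA : Atoms S = ∅ := (Set.ncard_eq_zero hAfin).mp h
    rw [hA, AddSubmonoid.closure_empty] at hmem1
    have : g+1 = (0:ℤ) := by simpa using hmem1
    omega
  · obtain ⟨c, hc⟩ := Set.ncard_eq_one.mp h
    have hcA : c ∈ Atoms S := by rw [hc]; rfl
    have hcS : c ∈ S := hcA.1.1
    have hc0 : c ≠ 0 := hcA.1.2
    have hc1 : 1 ≤ c := by have := hpos c hcS; omega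
    rw [hc] at hmem1 hmem2
    obtain ⟨n, hn⟩ := AddSubmonoid.mem_closure_singleton.mp hmem1
    obtain ⟨m, hm⟩ := AddSubmonoid.mem_closure_singleton.mp hmem2
    rw [nsmul_eq_mul] at hn hm
    have hdvd : c ∣ 1 := ⟨(m:ℤ) - (n:ℤ), by linear_combination hn - hm⟩
    have : c = 1 := le_antisymm (Int.le_of_dvd one_pos hdvd) hc1
    exact hSne (S_eq_of_one_mem h0 hadd hpos (this ▸ hcS))
theorem sylvester {S : Set ℤ} {g : ℤ} (h0 : (0:ℤ) ∈ S)
    (hadd : ∀ a ∈ S, ∀ b ∈ S, a + b ∈ S) (hpos : ∀ s ∈ S, 0 ≤ s)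
    (hSne : S ≠ {z : ℤ | 0 ≤ z}) (hfin : {n : ℤ | 0 ≤ n ∧ n ∉ S}.Finite)
    (hg : g ∉ S) (hg' : ∀ z : ℤ, 0 ≤ z → g < z → z ∈ S) (hg1 : 1 ≤ g)
    (hA : (Atoms S).ncard = 2) :
    (S ∩ Set.Icc 0 g).ncard = {z : ℤ | 0 ≤ z ∧ z ∉ S}.ncard := by
  obtain ⟨a, b, hab, hAs⟩ := Set.ncard_eq_two.mp hA
  have haA : a ∈ Atoms S := by rw [hAs]; exact Set.mem_insert _ _
  have hbA : b ∈ Atoms S := by rw [hAs]; exact Set.mem_insert_iff.mpr (Or.inr rfl)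
  have haS : a ∈ S := haA.1.1
  have hbS : b ∈ S := hbA.1.1
  have h1S : (1:ℤ) ∉ S := fun h => hSne (S_eq_of_one_mem h0 hadd hpos h)
  have ha2 : 2 ≤ a := by
    have h1 := hpos a haS
    have h2 : a ≠ 0 := haA.1.2
    have h3 : a ≠ 1 := fun h => h1S (h ▸ haS)
    omega
  have hb2 : 2 ≤ b := by
    have h1 := hpos b hbS
    have h2 : b ≠ 0 := hbA.1.2
    have h3 : b ≠ 1 := fun h => h1S (h ▸ hbS)
    omega
  have hb0 : (0:ℤ) < b := by omega
  have hSc : ∀ s ∈ S, s ∈ AddSubmonoid.closure ({a, b} : Set ℤ) := by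
    rw [← hAs]
    exact mem_closure_atoms hpos
  -- coprimality
  obtain ⟨p1, q1, hpq1⟩ := AddSubmonoid.mem_closure_pair a b (g+1) |>.mp
    (hSc _ (hg' (g+1) (by omega) (by omega)))
  obtain ⟨p2, q2, hpq2⟩ := AddSubmonoid.mem_closure_pair a b (g+2) |>.mp
    (hSc _ (hg' (g+2) (by omega) (by omega)))
  rw [nsmul_eq_mul, nsmul_eq_mul] at hpq1 hpq2
  have hgcd : IsCoprime a b := by
    rw [Int.isCoprime_iff_gcd_eq_one]
    have hda : (Int.gcd a b : ℤ) ∣ a := Int.gcd_dvd_left a b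
    have hdb : (Int.gcd a b : ℤ) ∣ b := Int.gcd_dvd_right a b
    have hd1 : (Int.gcd a b : ℤ) ∣ g + 1 := by
      rw [← hpq1]; exact dvd_add (hda.mul_left _) (hdb.mul_left _)
    have hd2 : (Int.gcd a b : ℤ) ∣ g + 2 := by
      rw [← hpq2]; exact dvd_add (hda.mul_left _) (hdb.mul_left _)
    have h1 : (Int.gcd a b : ℤ) ∣ 1 := by
      have := dvd_sub hd2 hd1
      simpa using this
    have h2 : Int.gcd a b ∣ 1 := by exact_mod_cast h1
    exact Nat.dvd_one.mp h2
  obtain ⟨u, v, huv⟩ := id hgcd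
  -- canonical representation: existence
  have hrep : ∀ n : ℤ, ∃ x y : ℤ, 0 ≤ x ∧ x < b ∧ n = x*a + y*b := by
    intro n
    have hdvd : b ∣ n - ((u*n) % b)*a := by
      refine ⟨n*v + ((u*n)/b)*a, ?_⟩
      rw [Int.emod_def]
      linear_combination (-n) * huv
    refine ⟨(u*n) % b, (n - ((u*n) % b)*a)/b, Int.emod_nonneg _ (by omega),
      Int.emod_lt_of_pos _ hb0, ?_⟩
    rw [Int.ediv_mul_cancel hdvd]
    ring
  -- uniqueness
  have huniq : ∀ x₁ y₁ x₂ y₂ : ℤ, 0 ≤ x₁ → x₁ < b → 0 ≤ x₂ → x₂ < b →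
      x₁*a + y₁*b = x₂*a + y₂*b → x₁ = x₂ ∧ y₁ = y₂ := by
    intro x₁ y₁ x₂ y₂ h1 h2 h3 h4 heq
    have hd : b ∣ (x₁ - x₂) * a := ⟨y₂ - y₁, by linear_combination heq⟩
    have hd2 : b ∣ x₁ - x₂ := (hgcd.symm).dvd_of_dvd_mul_right hd
    have hx : x₁ - x₂ = 0 := Int.eq_zero_of_abs_lt_dvd hd2 (abs_lt.mpr ⟨by omega, by omega⟩)
    have hxe : x₁ = x₂ := by omega
    refine ⟨hxe, ?_⟩
    have hyb : (y₁ - y₂) * b = 0 := by linear_combination heq - a * hx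
    rcases mul_eq_zero.mp hyb with h | h
    · omega
    · omega
  have hcombo : ∀ x y : ℤ, 0 ≤ x → 0 ≤ y → x*a + y*b ∈ S := fun x y hx hy =>
    hadd _ (zmul_mem h0 hadd hx haS) _ (zmul_mem h0 hadd hy hbS)
  -- membership criterion
  have hmemS : ∀ n x y : ℤ, 0 ≤ x → x < b → n = x*a + y*b → (n ∈ S ↔ 0 ≤ y) := by
    intro n x y hx hxb hn
    constructor
    · intro hnS
      obtain ⟨p, q, hpq⟩ := AddSubmonoid.mem_closure_pair a b n |>.mp (hSc n hnS)
      rw [nsmul_eq_mul, nsmul_eq_mul] at hpq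
      have hdiv : (p:ℤ) = b*((p:ℤ)/b) + (p:ℤ)%b := (Int.mul_ediv_add_emod _ _).symm
      have hk : 0 ≤ (p:ℤ)/b := Int.ediv_nonneg (Int.natCast_nonneg p) hb0.le
      have hx'1 : 0 ≤ (p:ℤ)%b := Int.emod_nonneg _ (by omega)
      have hx'2 : (p:ℤ)%b < b := Int.emod_lt_of_pos _ hb0
      have heq2 : n = ((p:ℤ)%b)*a + ((q:ℤ) + ((p:ℤ)/b)*a)*b := by
        linear_combination (-1) * hpq + a * hdiv
      have hy' := (huniq x y ((p:ℤ)%b) ((q:ℤ) + ((p:ℤ)/b)*a) hx hxb hx'1 hx'2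
        (by linear_combination heq2 - hn)).2
      have hqa : 0 ≤ ((p:ℤ)/b)*a := mul_nonneg hk (by omega)
      have hq0 : (0:ℤ) ≤ (q:ℤ) := Int.natCast_nonneg q
      rw [hy']
      linarith
    · intro hy
      have := hcombo x y hx hy
      rwa [← hn] at this
  -- representation of g
  obtain ⟨x₀, y₀, hx₀, hx₀b, hge⟩ := hrep g
  have hy₀ : ¬ 0 ≤ y₀ := fun h => hg ((hmemS g x₀ y₀ hx₀ hx₀b hge).mpr h)
  have hgb : g + b ∈ S := hg' _ (by omega) (by omega)
  have h1 : 0 ≤ y₀ + 1 :=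
    (hmemS (g+b) x₀ (y₀+1) hx₀ hx₀b (by linear_combination hge)).mp hgb
  have hy₀e : y₀ = -1 := by omega
  have hga : g + a ∈ S := hg' _ (by omega) (by omega)
  have hx₀e : x₀ = b - 1 := by
    by_contra hne
    have hlt : x₀ + 1 < b := by omega
    have := (hmemS (g+a) (x₀+1) y₀ (by omega) hlt (by linear_combination hge)).mp hga
    omega
  rw [hx₀e, hy₀e] at hge
  -- gaps pair with elements
  have hgap : ∀ n : ℤ, 0 ≤ n → n ∉ S → g - n ∈ S := by
    intro n hn hnS
    obtain ⟨x₁, y₁, hx₁, hx₁b, he⟩ := hrep n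
    have hy₁ : ¬ 0 ≤ y₁ := fun h => hnS ((hmemS n x₁ y₁ hx₁ hx₁b he).mpr h)
    have hgn : g - n = (b-1-x₁)*a + (-1-y₁)*b := by linear_combination hge - he
    rw [hgn]
    exact hcombo _ _ (by omega) (by omega)
  -- counting
  have hTfin : (S ∩ Set.Icc 0 g).Finite := (Set.finite_Icc _ _).subset Set.inter_subset_right
  have himg : (fun x => g - x) '' {z : ℤ | 0 ≤ z ∧ z ∉ S} ⊆ S ∩ Set.Icc 0 g := by
    rintro _ ⟨x, ⟨hx0, hxS⟩, rfl⟩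
    have hxle : x ≤ g := by
      by_contra hc
      push_neg at hc
      exact hxS (hg' x hx0 hc)
    refine ⟨hgap x hx0 hxS, ?_⟩
    simp only [Set.mem_Icc]
    omega
  have hle1 : {z : ℤ | 0 ≤ z ∧ z ∉ S}.ncard ≤ (S ∩ Set.Icc 0 g).ncard := by
    calc {z : ℤ | 0 ≤ z ∧ z ∉ S}.ncard
        = ((fun x => g - x) '' {z : ℤ | 0 ≤ z ∧ z ∉ S}).ncard :=
          (Set.ncard_image_of_injOn (fun x _ y _ h => by omega)).symm
      _ ≤ _ := Set.ncard_le_ncard himg hTfin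
  have hle2 := T_le_G hadd hfin hg
  omega

end MuAux

theorem mu_bounds (S : Set ℤ) (hS : IsNumericalSemigroup S)
    (hSne : S ≠ {z : ℤ | 0 ≤ z})
    (g : ℤ) (hg : g ∉ S) (hg' : ∀ z : ℤ, 0 ≤ z → g < z → z ∈ S)
    (ν δ : ℕ) (hν : ν = ((S \ {0}) \ {z : ℤ | ∃ a ∈ S \ {0}, ∃ b ∈ S \ {0}, a + b = z}).ncard)
    (hδ : δ = {z : ℤ | 0 ≤ z ∧ z ∉ S}.ncard)
    (μ : ℤ) (hμ : μ = 2 * ν + 1 + 2 * δ) :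
    (g + 6 ≤ μ ∧ μ ≤ 4 * g + 3) ∧
    (μ = g + 6 ↔ ν = 2) ∧
    (μ = 4 * g + 3 ↔ S = {z : ℤ | z = 0 ∨ g + 1 ≤ z}) := by
  obtain ⟨h0, hadd, hpos, hfin⟩ := hS
  have hg0 : 0 ≤ g := by
    by_contra hc
    push_neg at hc
    refine hSne (Set.ext fun z => ⟨fun hz => hpos z hz, fun hz => hg' z hz (lt_of_lt_of_le hc hz)⟩)
  have hgne : g ≠ 0 := fun h => hg (h ▸ h0)
  have hg1 : 1 ≤ g := by omega
  have hνA : ν = (MuAux.Atoms S).ncard := hν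
  have hν2 : 2 ≤ ν := hνA ▸ MuAux.two_le_atoms_ncard h0 hadd hpos hSne hg' hg1
  have hνle : ν ≤ (g+1).toNat := hνA ▸ MuAux.atoms_ncard_le h0 hadd hpos hg' hg1
  have hIcc1g : (Set.Icc (1:ℤ) g).ncard = g.toNat := by
    rw [← Finset.coe_Icc, Set.ncard_coe_finset, Int.card_Icc]
    norm_num
  have hGsub : {z : ℤ | 0 ≤ z ∧ z ∉ S} ⊆ Set.Icc 1 g := by
    rintro z ⟨hz0, hzS⟩
    have hz1 : z ≠ 0 := fun h => hzS (h ▸ h0)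
    have hz2 : z ≤ g := by
      by_contra hc
      push_neg at hc
      exact hzS (hg' z hz0 hc)
    exact ⟨by omega, hz2⟩
  have hδle : δ ≤ g.toNat := by
    rw [hδ, ← hIcc1g]
    exact Set.ncard_le_ncard hGsub (Set.finite_Icc _ _)
  have hcount := MuAux.count_partition (S := S) hg'
  have hTle := MuAux.T_le_G hadd hfin hg
  refine ⟨⟨by omega, by omega⟩, ⟨fun h => by omega, fun h => ?_⟩, fun h => ?_, fun h => ?_⟩
  · -- ν = 2 → μ = g + 6
    have hA2 : (MuAux.Atoms S).ncard = 2 := by omega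
    have hsyl := MuAux.sylvester h0 hadd hpos hSne hfin hg hg' hg1 hA2
    omega
  · -- μ = 4g+3 → S = target
    have hδg : δ = g.toNat := by omega
    have hGeq : {z : ℤ | 0 ≤ z ∧ z ∉ S} = Set.Icc 1 g := by
      refine Set.eq_of_subset_of_ncard_le hGsub ?_ (Set.finite_Icc _ _)
      omega
    ext z
    simp only [Set.mem_setOf_eq]
    constructor
    · intro hz
      have h1 := hpos z hz
      by_contra hc
      push_neg at hc
      obtain ⟨hc1, hc2⟩ := hc
      have hzI : z ∈ Set.Icc (1:ℤ) g := ⟨by omega, by omega⟩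
      rw [← hGeq] at hzI
      exact hzI.2 hz
    · rintro (rfl | hz)
      · exact h0
      · exact hg' z (by omega) (by omega)
  · -- S = target → μ = 4g+3
    have hS1 : S \ {0} = {z : ℤ | g+1 ≤ z} := by
      rw [h]
      ext z
      simp only [Set.mem_diff, Set.mem_setOf_eq, Set.mem_singleton_iff]
      omega
    have hGeq : {z : ℤ | 0 ≤ z ∧ z ∉ S} = Set.Icc 1 g := by
      rw [h]
      ext z
      simp only [Set.mem_setOf_eq, Set.mem_Icc]
      omega
    have hδval : δ = g.toNat := by rw [hδ, hGeq, hIcc1g]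
    have hsum : {z : ℤ | ∃ a ∈ S \ {0}, ∃ b ∈ S \ {0}, a + b = z} = {z : ℤ | 2*g+2 ≤ z} := by
      ext z
      simp only [hS1, Set.mem_setOf_eq]
      constructor
      · rintro ⟨a, ha, b, hb, rfl⟩
        omega
      · intro hz
        exact ⟨g+1, by omega, z - (g+1), by omega, by ring⟩
    have hAeq : ((S \ {0}) \ {z : ℤ | ∃ a ∈ S \ {0}, ∃ b ∈ S \ {0}, a + b = z})
        = Set.Icc (g+1) (2*g+1) := by
      rw [hsum, hS1]
      ext z
      simp only [Set.mem_diff, Set.mem_setOf_eq, Set.mem_Icc]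
      omega
    have hνval : ν = (g+1).toNat := by
      rw [hν, hAeq, ← Finset.coe_Icc, Set.ncard_coe_finset, Int.card_Icc]
      congr 1
      ring
    omega
end

section
/- Let Σ ⊆ ℕ² be a submonoid with finite complement in ℕ², with partial order σ₁ ⪯ σ₂ iff σ₂ − σ₁ ∈ Σ, and for x ∈ Σ let B(x) = {σ ∈ Σ : σ ⪯ x}. A proper ideal I of Σ (I + Σ ⊆ I) is not the intersection of any family of ideals properly containing it (completely irreducible) if and only if I = Σ \ B(x) for some x ∈ Σ. -/
/-- `I` is an ideal of the semigroup `Sg ⊆ ℕ²`. -/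
def IsIdealOf (Sg I : Set (ℕ × ℕ)) : Prop :=
  I ⊆ Sg ∧ ∀ a ∈ I, ∀ s ∈ Sg, a + s ∈ I

theorem completely_irreducible_iff (Sg : Set (ℕ × ℕ))
    (h0 : (0, 0) ∈ Sg) (hadd : ∀ a ∈ Sg, ∀ b ∈ Sg, a + b ∈ Sg)
    (hfin : {p : ℕ × ℕ | p ∉ Sg}.Finite)
    (I : Set (ℕ × ℕ)) (hI : IsIdealOf Sg I) (hproper : I ≠ Sg) :
    (¬ ∃ 𝒥 : Set (Set (ℕ × ℕ)),
        (∀ J ∈ 𝒥, IsIdealOf Sg J ∧ I ⊂ J) ∧ I = ⋂₀ 𝒥) ↔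
    ∃ x ∈ Sg, I = Sg \ {σ ∈ Sg | ∃ σ₃ ∈ Sg, σ + σ₃ = x} := by
  obtain ⟨hIsub, hIadd⟩ := hI
  have hIcomp : ∀ x, x ∈ Sg → x ∉ I →
      I ⊆ Sg \ {σ ∈ Sg | ∃ σ₃ ∈ Sg, σ + σ₃ = x} := by
    intro x hxS hxI a haI
    refine ⟨hIsub haI, ?_⟩
    rintro ⟨haS, σ₃, hσ₃S, heq⟩
    exact hxI (heq ▸ hIadd a haI σ₃ hσ₃S)
  constructor
  · intro hcir
    by_contra hno
    push_neg at hno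
    apply hcir
    refine ⟨(fun x => Sg \ {σ ∈ Sg | ∃ σ₃ ∈ Sg, σ + σ₃ = x}) '' (Sg \ I), ?_, ?_⟩
    · rintro J ⟨x, ⟨hxS, hxI⟩, rfl⟩
      refine ⟨⟨fun a ha => ha.1, ?_⟩, (hIcomp x hxS hxI).ssubset_of_ne (hno x hxS)⟩
      rintro a ⟨haS, haB⟩ s hs
      refine ⟨hadd a haS s hs, ?_⟩
      rintro ⟨_, σ₃, hσ₃, heq⟩
      exact haB ⟨haS, s + σ₃, hadd s hs σ₃ hσ₃, by rw [← add_assoc]; exact heq⟩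
    · apply Set.Subset.antisymm
      · rintro a haI J ⟨x, ⟨hxS, hxI⟩, rfl⟩
        exact hIcomp x hxS hxI haI
      · intro a ha
        by_contra haI
        obtain ⟨y, hyS, hyI⟩ : ∃ y ∈ Sg, y ∉ I := by
          by_contra h; push_neg at h
          exact hproper (Set.Subset.antisymm hIsub h)
        have haS : a ∈ Sg := (ha _ ⟨y, ⟨hyS, hyI⟩, rfl⟩).1
        have h2 := ha _ ⟨a, ⟨haS, haI⟩, rfl⟩
        exact h2.2 ⟨haS, (0, 0), h0, by simp⟩
  · rintro ⟨x, hxS, rfl⟩ ⟨𝒥, h𝒥, hInt⟩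
    have hxI : x ∉ Sg \ {σ ∈ Sg | ∃ σ₃ ∈ Sg, σ + σ₃ = x} := by
      intro hx
      exact hx.2 ⟨hxS, (0, 0), h0, by simp⟩
    apply hxI
    rw [hInt]
    intro J hJ
    obtain ⟨⟨hJsub, hJadd⟩, hss⟩ := h𝒥 J hJ
    obtain ⟨y, hyJ, hyI⟩ := Set.exists_of_ssubset hss
    have hyS : y ∈ Sg := hJsub hyJ
    have hyB : ∃ σ₃ ∈ Sg, y + σ₃ = x := by
      by_contra hc
      exact hyI ⟨hyS, fun h => hc h.2⟩
    obtain ⟨σ₃, hσ₃S, heq⟩ := hyB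
    exact heq ▸ hJadd y hyJ σ₃ hσ₃S
end
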